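/- arXiv:1107.4623 — 9 statements merged into one kernel-verified Lean document; each statement's English description precedes it below -/
import Mathlib

section
/- Let Q ⊆ ℂⁿ, A ∈ ℂ^{m×n}, y = A x* + e, η > 0, and suppose x⊥ ∈ Q. Let x^k ∈ ℂⁿ and let x^{k+1} ∈ Q satisfy ‖x^{k+1} − (x^k − η·Aᴴ(A x^k − y))‖₂ ≤ ‖u − (x^k − η·Aᴴ(A x^k − y))‖₂ for all u ∈ Q (i.e., x^{k+1} is a projection of the gradient step onto Q). Set d^k = x^k − x⊥, d^{k+1} = x^{k+1} − x⊥, and d* = x* − x⊥. Then ‖d^{k+1}‖₂² ≤ 2·Re[⟨d^k, d^{k+1}⟩ − η⟨A d^k, A d^{k+1}⟩] + 2η·Re⟨A d^{k+1}, A d* + e⟩. -/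
open scoped Classical

noncomputable def l2norm {n : ℕ} (v : Fin n → ℂ) : ℝ :=
  Real.sqrt (∑ i, ‖v i‖ ^ 2)

noncomputable def l1norm {n : ℕ} (v : Fin n → ℂ) : ℝ :=
  ∑ i, ‖v i‖

noncomputable def lpPow {n : ℕ} (p : ℝ) (v : Fin n → ℂ) : ℝ :=
  ∑ i, ‖v i‖ ^ p

noncomputable def lpnorm {n : ℕ} (p : ℝ) (v : Fin n → ℂ) : ℝ :=
  (∑ i, ‖v i‖ ^ p) ^ (1/p)

noncomputable def Fball {n : ℕ} (p c : ℝ) : Set (Fin n → ℂ) :=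
  {x | ∑ i, ‖x i‖ ^ p ≤ c}

def IsProj {n : ℕ} (p c : ℝ) (x xp : Fin n → ℂ) : Prop :=
  xp ∈ Fball p c ∧ ∀ u ∈ Fball p c, l2norm (x - xp) ≤ l2norm (x - u)

def Sparse {n : ℕ} (t : ℕ) (v : Fin n → ℂ) : Prop :=
  (Finset.univ.filter fun i => v i ≠ 0).card ≤ t

noncomputable def herm {n : ℕ} (u v : Fin n → ℂ) : ℂ :=
  ∑ i, (starRingEnd ℂ) (u i) * v i

noncomputable def restrict {n : ℕ} (I : Finset (Fin n)) (d : Fin n → ℂ) : Fin n → ℂ :=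
  fun i => if i ∈ I then d i else 0

/-! Since `xperp ∈ Q`, the nearest-point property of `xk1` gives `‖xk1 - g‖ ≤ ‖xperp - g‖` for the
gradient step `g`; expanding the square around `xperp` turns this into
`‖d₊‖² ≤ 2 Re ⟨d₊, g - xperp⟩`. Substituting `g - xperp = d - η Aᴴ (A d - (A d* + e))` and moving
`Aᴴ` across the inner product gives the claim. -/

open scoped InnerProductSpace Matrix

theorem norm_sub_sq_le_two_mul_re_inner_of_norm_sub_le {𝕜 E : Type*} [RCLike 𝕜]
    [NormedAddCommGroup E] [InnerProductSpace 𝕜 E] {p q g : E} (h : ‖p - g‖ ≤ ‖q - g‖) :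
    ‖p - q‖ ^ 2 ≤ 2 * RCLike.re ⟪p - q, g - q⟫_𝕜 := by
  have hsq : ‖(p - q) - (g - q)‖ ^ 2 ≤ ‖g - q‖ ^ 2 := by
    rw [sub_sub_sub_cancel_right, ← norm_neg (g - q), neg_sub]
    exact pow_le_pow_left₀ (norm_nonneg _) h 2
  rw [@norm_sub_sq 𝕜] at hsq
  linarith

section Herm

variable {m n : ℕ}

theorem herm_eq_star_dotProduct (u v : Fin n → ℂ) : herm u v = star u ⬝ᵥ v := rfl

theorem herm_eq_inner (u v : Fin n → ℂ) :
    herm u v = ⟪WithLp.toLp 2 u, WithLp.toLp 2 v⟫_ℂ := by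
  simp [herm, EuclideanSpace.inner_toLp_toLp, dotProduct, mul_comm]

theorem l2norm_eq_norm (v : Fin n → ℂ) : l2norm v = ‖WithLp.toLp 2 v‖ := by
  rw [EuclideanSpace.norm_eq]; rfl

theorem herm_sub_right (u v w : Fin n → ℂ) : herm u (v - w) = herm u v - herm u w := by
  simp only [herm_eq_inner, WithLp.toLp_sub, inner_sub_right]

theorem herm_smul_right (c : ℂ) (u v : Fin n → ℂ) : herm u (c • v) = c * herm u v := by
  simp only [herm_eq_inner, WithLp.toLp_smul, inner_smul_right]

theorem re_herm_comm (u v : Fin n → ℂ) : (herm u v).re = (herm v u).re := by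
  simp only [herm_eq_inner]
  exact inner_re_symm (𝕜 := ℂ) _ _

theorem herm_conjTranspose_mulVec (A : Matrix (Fin m) (Fin n) ℂ) (u : Fin n → ℂ)
    (v : Fin m → ℂ) : herm u (Aᴴ *ᵥ v) = herm (A *ᵥ u) v := by
  rw [herm_eq_star_dotProduct, herm_eq_star_dotProduct, Matrix.dotProduct_mulVec,
    Matrix.star_mulVec]

theorem l2norm_sub_sq_le_of_l2norm_sub_le {p q g : Fin n → ℂ}
    (h : l2norm (p - g) ≤ l2norm (q - g)) :
    l2norm (p - q) ^ 2 ≤ 2 * (herm (p - q) (g - q)).re := by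
  simp only [l2norm_eq_norm, herm_eq_inner, WithLp.toLp_sub] at h ⊢
  exact norm_sub_sq_le_two_mul_re_inner_of_norm_sub_le (𝕜 := ℂ) h

end Herm

theorem pgd_iterate_inequality_general
    {m n : ℕ} (Q : Set (Fin n → ℂ))
    (A : Matrix (Fin m) (Fin n) ℂ)
    (xstar xperp xk xk1 : Fin n → ℂ) (e y : Fin m → ℂ)
    (hy : y = A.mulVec xstar + e)
    (η : ℝ)
    (hxperp : xperp ∈ Q)
    (hproj : ∀ u ∈ Q,
      l2norm (xk1 - (xk - (η : ℂ) • (A.conjTranspose.mulVec (A.mulVec xk - y)))) ≤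
      l2norm (u - (xk - (η : ℂ) • (A.conjTranspose.mulVec (A.mulVec xk - y))))) :
    l2norm (xk1 - xperp) ^ 2 ≤
      2 * (herm (xk - xperp) (xk1 - xperp)
            - (η : ℂ) * herm (A.mulVec (xk - xperp)) (A.mulVec (xk1 - xperp))).re
      + 2 * η * (herm (A.mulVec (xk1 - xperp)) (A.mulVec (xstar - xperp) + e)).re := by
  have hstep : xk - (η : ℂ) • Aᴴ *ᵥ (A *ᵥ xk - y) - xperp = xk - xperp
      - (η : ℂ) • Aᴴ *ᵥ (A *ᵥ (xk - xperp) - (A *ᵥ (xstar - xperp) + e)) := by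
    simp only [hy, Matrix.mulVec_sub, Matrix.mulVec_add, smul_sub, smul_add]
    abel
  have h := l2norm_sub_sq_le_of_l2norm_sub_le (hproj xperp hxperp)
  rw [hstep, herm_sub_right _ (xk - xperp), herm_smul_right, herm_conjTranspose_mulVec,
    herm_sub_right (A *ᵥ (xk1 - xperp))] at h
  simp only [Complex.sub_re, Complex.re_ofReal_mul] at h ⊢
  rw [re_herm_comm (xk - xperp), re_herm_comm (A *ᵥ (xk - xperp))]
  linarith

theorem pgd_iterate_inequality
    {m n : ℕ} (Q : Set (Fin n → ℂ))
    (A : Matrix (Fin m) (Fin n) ℂ)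
    (xstar xperp xk xk1 : Fin n → ℂ) (e y : Fin m → ℂ)
    (hy : y = A.mulVec xstar + e)
    (η : ℝ) (hη : 0 < η)
    (hxperp : xperp ∈ Q) (hxk1Q : xk1 ∈ Q)
    (hproj : ∀ u ∈ Q,
      l2norm (xk1 - (xk - (η : ℂ) • (A.conjTranspose.mulVec (A.mulVec xk - y)))) ≤
      l2norm (u - (xk - (η : ℂ) • (A.conjTranspose.mulVec (A.mulVec xk - y))))) :
    l2norm (xk1 - xperp) ^ 2 ≤
      2 * (herm (xk - xperp) (xk1 - xperp)
            - (η : ℂ) * herm (A.mulVec (xk - xperp)) (A.mulVec (xk1 - xperp))).re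
      + 2 * η * (herm (A.mulVec (xk1 - xperp)) (A.mulVec (xstar - xperp) + e)).re :=
  pgd_iterate_inequality_general Q A xstar xperp xk xk1 e y hy η hxperp hproj
end

section
/- (Shifting inequality) Let 0 < p < 2, let l, r ≥ 1 be integers, and let u₁ ≥ u₂ ≥ ⋯ ≥ u_{l+r} ≥ 0 be real numbers. Then (Σ_{i=l+1}^{l+r} uᵢ²)^{1/2} ≤ C·(Σ_{i=1}^{r} uᵢ^p)^{1/p}, where C = max{ r^{1/2−1/p}, √(p/2)·((2/(2−p))·l)^{1/2−1/p} }. -/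
open scoped Classical

/-!
Write `a i = u i ^ p` and `q = 2 / p ≥ 1`. On `[1, l + r]` the nonincreasing nonnegative
sequence `a` is a nonnegative combination of indicators of initial segments `[1, k]`. The
left-hand side is a power of an `ℓ^q` norm of `a`, to which Minkowski's inequality applies, and
the right-hand side is linear in `a`, so it suffices to check the inequality on these indicators,
where it reads `√(k - l) ≤ C · (min k r) ^ (1 / p)` for `l < k ≤ l + r`. For `k > r` this is
immediate; for `k ≤ r` it is the tangent-line inequality of `x ↦ x ^ (2 / p)` at
`k₀ = 2 l / (2 - p)`, the point where `√(k - l) · k ^ (-1 / p)` is maximal.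
-/

open Finset Real

namespace Real

theorem Lp_sum_le_of_nonneg {ι κ : Type*} (s : Finset ι) (t : Finset κ) {q : ℝ} (hq : 1 ≤ q)
    {f : κ → ι → ℝ} (hf : ∀ k ∈ t, ∀ i ∈ s, 0 ≤ f k i) :
    (∑ i ∈ s, (∑ k ∈ t, f k i) ^ q) ^ (1 / q) ≤ ∑ k ∈ t, (∑ i ∈ s, f k i ^ q) ^ (1 / q) := by
  induction t using Finset.induction_on with
  | empty =>
    have hq0 : q ≠ 0 := by positivity
    simp [zero_rpow hq0, zero_rpow (inv_ne_zero hq0)]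
  | insert k t hk ih =>
    have hft : ∀ j ∈ t, ∀ i ∈ s, 0 ≤ f j i := fun j hj => hf j (mem_insert_of_mem hj)
    simp only [sum_insert hk]
    calc (∑ i ∈ s, (f k i + ∑ j ∈ t, f j i) ^ q) ^ (1 / q)
        ≤ (∑ i ∈ s, f k i ^ q) ^ (1 / q) + (∑ i ∈ s, (∑ j ∈ t, f j i) ^ q) ^ (1 / q) :=
          Lp_add_le_of_nonneg s hq (hf k (mem_insert_self k t))
            fun i hi => sum_nonneg fun j hj => hft j hj i hi
      _ ≤ _ := add_le_add_right (ih hft) _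

end Real

theorem Icc_filter_le {α : Type*} [LinearOrder α] [LocallyFiniteOrder α] (a b c : α) :
    {x ∈ Icc a b | x ≤ c} = Icc a (min b c) := by
  ext x
  simp [and_assoc]

/-- The coefficient of the indicator of `[1, k]` when `a` is written on `[1, N]` as a combination
of indicators of initial segments. -/
noncomputable def layerHeight (a : ℕ → ℝ) (N k : ℕ) : ℝ :=
  (Set.Iic N).indicator a k - (Set.Iic N).indicator a (k + 1)

theorem sum_Icc_layerHeight (a : ℕ → ℝ) {N i : ℕ} (hi : i ≤ N) :
    ∑ k ∈ Icc i N, layerHeight a N k = a i := by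
  have htelescope := sum_Icc_sub hi ((Set.Iic N).indicator a)
  have htop : (Set.Iic N).indicator a (N + 1) = 0 := by simp
  have hbot : (Set.Iic N).indicator a i = a i := by simp [hi]
  simp only [layerHeight, sum_sub_distrib] at htelescope ⊢
  linarith

theorem layerHeight_nonneg {a : ℕ → ℝ} {N k : ℕ} (ha : AntitoneOn a (Icc 1 N))
    (ha0 : ∀ i ∈ Icc 1 N, 0 ≤ a i) (hk : k ∈ Icc 1 N) : 0 ≤ layerHeight a N k := by
  rw [mem_Icc] at hk
  rcases hk.2.lt_or_eq with hlt | rfl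
  · have hk1 : k + 1 ∈ Icc 1 N := mem_Icc.2 ⟨by omega, hlt⟩
    have := ha (mem_coe.2 (mem_Icc.2 hk)) (mem_coe.2 hk1) k.le_succ
    simpa [layerHeight, hk.2, hlt]
  · simpa [layerHeight] using ha0 k (mem_Icc.2 hk)

theorem Lp_le_mul_sum_of_antitoneOn {q K : ℝ} (hq : 1 ≤ q) {N : ℕ} {T R : Finset ℕ}
    (hT : T ⊆ Icc 1 N) (hR : R ⊆ Icc 1 N) {a : ℕ → ℝ} (ha : AntitoneOn a (Icc 1 N))
    (ha0 : ∀ i ∈ Icc 1 N, 0 ≤ a i)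
    (hseg : ∀ k ∈ Icc 1 N, (#{i ∈ T | i ≤ k} : ℝ) ^ (1 / q) ≤ K * #{i ∈ R | i ≤ k}) :
    (∑ i ∈ T, a i ^ q) ^ (1 / q) ≤ K * ∑ i ∈ R, a i := by
  set v := layerHeight a N
  have hv0 : ∀ k ∈ Icc 1 N, 0 ≤ v k := fun k hk => layerHeight_nonneg ha ha0 hk
  have hlayers : ∀ i ∈ Icc 1 N, a i = ∑ k ∈ Icc 1 N, if i ≤ k then v k else 0 := by
    intro i hi
    rw [← sum_filter, ← sum_Icc_layerHeight a (mem_Icc.1 hi).2]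
    congr 1
    ext k
    simp only [mem_filter, mem_Icc] at hi ⊢
    omega
  have hq0 : q ≠ 0 := by positivity
  calc (∑ i ∈ T, a i ^ q) ^ (1 / q)
      = (∑ i ∈ T, (∑ k ∈ Icc 1 N, if i ≤ k then v k else 0) ^ q) ^ (1 / q) := by
        rw [sum_congr rfl fun i hi => by rw [hlayers i (hT hi)]]
    _ ≤ ∑ k ∈ Icc 1 N, (∑ i ∈ T, (if i ≤ k then v k else 0) ^ q) ^ (1 / q) :=
        Lp_sum_le_of_nonneg T _ hq fun k hk i _ => by split_ifs <;> simp [hv0 k hk]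
    _ = ∑ k ∈ Icc 1 N, v k * (#{i ∈ T | i ≤ k} : ℝ) ^ (1 / q) := by
        refine sum_congr rfl fun k hk => ?_
        simp only [ite_pow, zero_rpow hq0]
        rw [← sum_filter, sum_const, nsmul_eq_mul,
          mul_rpow (by positivity) (rpow_nonneg (hv0 k hk) q),
          ← rpow_mul (hv0 k hk), mul_one_div_cancel hq0, rpow_one, mul_comm]
    _ ≤ ∑ k ∈ Icc 1 N, v k * (K * #{i ∈ R | i ≤ k}) :=
        sum_le_sum fun k hk => mul_le_mul_of_nonneg_left (hseg k hk) (hv0 k hk)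
    _ = K * ∑ i ∈ R, a i := by
        rw [sum_congr rfl fun i hi => hlayers i (hR hi), sum_comm, mul_sum]
        refine sum_congr rfl fun k _ => ?_
        rw [← sum_filter, sum_const, nsmul_eq_mul]
        ring

theorem Lp_le_mul_Lp_of_antitoneOn {p s C : ℝ} (hp : 0 < p) (hps : p ≤ s) (hC : 0 ≤ C) {N : ℕ}
    {T R : Finset ℕ} (hT : T ⊆ Icc 1 N) (hR : R ⊆ Icc 1 N) {u : ℕ → ℝ}
    (hu : AntitoneOn u (Icc 1 N)) (hu0 : ∀ i ∈ Icc 1 N, 0 ≤ u i)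
    (hseg : ∀ k ∈ Icc 1 N,
      (#{i ∈ T | i ≤ k} : ℝ) ^ (1 / s) ≤ C * (#{i ∈ R | i ≤ k} : ℝ) ^ (1 / p)) :
    (∑ i ∈ T, u i ^ s) ^ (1 / s) ≤ C * (∑ i ∈ R, u i ^ p) ^ (1 / p) := by
  have hs : 0 < s := hp.trans_le hps
  set q := s / p
  have hq : 1 ≤ q := (one_le_div hp).2 hps
  have hpow : ∀ i ∈ Icc 1 N, (u i ^ p) ^ q = u i ^ s := fun i hi => by
    rw [← rpow_mul (hu0 i hi), mul_div_cancel₀ _ hp.ne']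
  have hseg' : ∀ k ∈ Icc 1 N, (#{i ∈ T | i ≤ k} : ℝ) ^ (1 / q) ≤ C ^ p * #{i ∈ R | i ≤ k} := by
    intro k hk
    calc (#{i ∈ T | i ≤ k} : ℝ) ^ (1 / q) = ((#{i ∈ T | i ≤ k} : ℝ) ^ (1 / s)) ^ p := by
          rw [← rpow_mul (Nat.cast_nonneg _)]
          congr 1
          simp only [q]
          field_simp
      _ ≤ (C * (#{i ∈ R | i ≤ k} : ℝ) ^ (1 / p)) ^ p :=
          rpow_le_rpow (by positivity) (hseg k hk) hp.le
      _ = C ^ p * #{i ∈ R | i ≤ k} := by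
          rw [mul_rpow hC (by positivity), ← rpow_mul (Nat.cast_nonneg _),
            one_div_mul_cancel hp.ne', rpow_one]
  have hcore := Lp_le_mul_sum_of_antitoneOn hq hT hR (a := fun i => u i ^ p)
    (fun i hi j hj hij => rpow_le_rpow (hu0 j hj) (hu hi hj hij) hp.le)
    (fun i hi => rpow_nonneg (hu0 i hi) p) hseg'
  have hTsum : 0 ≤ ∑ i ∈ T, (u i ^ p) ^ q :=
    sum_nonneg fun i hi => rpow_nonneg (rpow_nonneg (hu0 i (hT hi)) p) q
  calc (∑ i ∈ T, u i ^ s) ^ (1 / s) = ((∑ i ∈ T, (u i ^ p) ^ q) ^ (1 / q)) ^ (1 / p) := by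
        rw [← rpow_mul hTsum, sum_congr rfl fun i hi => hpow i (hT hi)]
        congr 1
        simp only [q]
        field_simp
    _ ≤ (C ^ p * ∑ i ∈ R, u i ^ p) ^ (1 / p) :=
        rpow_le_rpow (rpow_nonneg hTsum _) hcore (by positivity)
    _ = C * (∑ i ∈ R, u i ^ p) ^ (1 / p) := by
        rw [mul_rpow (by positivity) (sum_nonneg fun i hi => rpow_nonneg (hu0 i (hR hi)) p),
          ← rpow_mul hC, mul_one_div_cancel hp.ne', rpow_one]

theorem sub_rpow_half_le {p l k : ℝ} (hp0 : 0 < p) (hp2 : p < 2) (hl : 0 < l) (hlk : l ≤ k) :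
    (k - l) ^ ((1 : ℝ) / 2) ≤
      √(p / 2) * (2 / (2 - p) * l) ^ ((1 : ℝ) / 2 - 1 / p) * k ^ (1 / p) := by
  set k₀ := 2 / (2 - p) * l
  have h2p : 0 < 2 - p := by linarith
  have hk₀ : 0 < k₀ := by positivity
  have hk : 0 < k := hl.trans_le hlk
  -- Bernoulli's inequality: the tangent line of `x ↦ x ^ (2 / p)` at `k₀`.
  have htangent : k - l ≤ p / 2 * k₀ * (k / k₀) ^ (2 / p) := by
    have hbern := one_add_mul_self_le_rpow_one_add (s := k / k₀ - 1) (p := 2 / p)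
      (by have := div_pos hk hk₀; linarith) (by rw [le_div_iff₀ hp0]; linarith)
    rw [add_sub_cancel] at hbern
    calc k - l = p / 2 * k₀ * (1 + 2 / p * (k / k₀ - 1)) := by
          simp only [k₀]; field_simp; ring
      _ ≤ _ := by gcongr
  calc (k - l) ^ ((1 : ℝ) / 2) ≤ (p / 2 * k₀ * (k / k₀) ^ (2 / p)) ^ ((1 : ℝ) / 2) :=
        rpow_le_rpow (by linarith) htangent (by norm_num)
    _ = √(p / 2) * k₀ ^ ((1 : ℝ) / 2 - 1 / p) * k ^ (1 / p) := by
        rw [mul_rpow (by positivity) (by positivity), mul_rpow (by positivity) hk₀.le,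
          ← rpow_mul (by positivity), ← sqrt_eq_rpow, div_rpow hk.le hk₀.le, rpow_sub hk₀]
        field_simp

theorem sub_rpow_half_le_max_mul_min_rpow {p : ℝ} (hp0 : 0 < p) (hp2 : p < 2) {l r k : ℕ}
    (hl : 1 ≤ l) (hk : k ≤ l + r) :
    ((k - l : ℕ) : ℝ) ^ ((1 : ℝ) / 2) ≤
      max ((r : ℝ) ^ ((1 : ℝ) / 2 - 1 / p))
          (√(p / 2) * (2 / (2 - p) * (l : ℝ)) ^ ((1 : ℝ) / 2 - 1 / p)) *
        ((min k r : ℕ) : ℝ) ^ (1 / p) := by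
  rcases le_or_gt k l with hkl | hlk
  · rw [Nat.sub_eq_zero_of_le hkl, Nat.cast_zero, zero_rpow (by norm_num)]
    exact mul_nonneg (le_max_of_le_left (by positivity)) (by positivity)
  rcases le_or_gt k r with hkr | hrk
  · rw [min_eq_left hkr, Nat.cast_sub hlk.le]
    exact (sub_rpow_half_le hp0 hp2 (by exact_mod_cast hl) (by exact_mod_cast hlk.le)).trans
      (mul_le_mul_of_nonneg_right (le_max_right _ _) (by positivity))
  rw [min_eq_right hrk.le]
  have hr : (0 : ℝ) < r := by exact_mod_cast (show 0 < r by omega)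
  calc ((k - l : ℕ) : ℝ) ^ ((1 : ℝ) / 2) ≤ (r : ℝ) ^ ((1 : ℝ) / 2) :=
        rpow_le_rpow (Nat.cast_nonneg _) (by exact_mod_cast (show k - l ≤ r by omega))
          (by norm_num)
    _ = (r : ℝ) ^ ((1 : ℝ) / 2 - 1 / p) * (r : ℝ) ^ (1 / p) := by
        rw [← rpow_add hr, sub_add_cancel]
    _ ≤ _ := mul_le_mul_of_nonneg_right (le_max_left _ _) (by positivity)

theorem shifting_inequality_general
    (p : ℝ) (hp0 : 0 < p) (hp2 : p < 2)
    (l r : ℕ) (hl : 1 ≤ l)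
    (u : ℕ → ℝ)
    (hdec : ∀ i j : ℕ, 1 ≤ i → i ≤ j → j ≤ l + r → u j ≤ u i)
    (hnonneg : ∀ i : ℕ, 1 ≤ i → i ≤ l + r → 0 ≤ u i) :
    (∑ i ∈ Finset.Icc (l + 1) (l + r), u i ^ 2) ^ ((1 : ℝ) / 2) ≤
      max ((r : ℝ) ^ ((1 : ℝ) / 2 - 1 / p))
          (Real.sqrt (p / 2) * (2 / (2 - p) * (l : ℝ)) ^ ((1 : ℝ) / 2 - 1 / p)) *
        (∑ i ∈ Finset.Icc 1 r, u i ^ p) ^ (1 / p) := by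
  set C := max ((r : ℝ) ^ ((1 : ℝ) / 2 - 1 / p))
    (√(p / 2) * (2 / (2 - p) * (l : ℝ)) ^ ((1 : ℝ) / 2 - 1 / p))
  have hC : 0 ≤ C := le_max_of_le_left (by positivity)
  have hT : Icc (l + 1) (l + r) ⊆ Icc 1 (l + r) := Icc_subset_Icc_left (by omega)
  have hR : Icc 1 r ⊆ Icc 1 (l + r) := Icc_subset_Icc_right (by omega)
  have hanti : AntitoneOn u (Icc 1 (l + r)) := fun i hi j hj hij =>
    hdec i j (mem_Icc.1 hi).1 hij (mem_Icc.1 hj).2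
  have key := Lp_le_mul_Lp_of_antitoneOn (s := 2) hp0 hp2.le hC hT hR hanti
    (fun i hi => hnonneg i (mem_Icc.1 hi).1 (mem_Icc.1 hi).2) fun k hk => by
      have hk := (mem_Icc.1 hk).2
      rw [Icc_filter_le, Icc_filter_le, Nat.card_Icc, Nat.card_Icc, min_eq_right hk,
        Nat.add_sub_add_right, Nat.add_sub_cancel, min_comm]
      exact sub_rpow_half_le_max_mul_min_rpow hp0 hp2 hl hk
  simpa only [rpow_two] using key

theorem shifting_inequality
    (p : ℝ) (hp0 : 0 < p) (hp2 : p < 2)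
    (l r : ℕ) (hl : 1 ≤ l) (hr : 1 ≤ r)
    (u : ℕ → ℝ)
    (hdec : ∀ i j : ℕ, 1 ≤ i → i ≤ j → j ≤ l + r → u j ≤ u i)
    (hnonneg : ∀ i : ℕ, 1 ≤ i → i ≤ l + r → 0 ≤ u i) :
    (∑ i ∈ Finset.Icc (l + 1) (l + r), u i ^ 2) ^ ((1 : ℝ) / 2) ≤
      max ((r : ℝ) ^ ((1 : ℝ) / 2 - 1 / p))
          (Real.sqrt (p / 2) * (2 / (2 - p) * (l : ℝ)) ^ ((1 : ℝ) / 2 - 1 / p)) *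
        (∑ i ∈ Finset.Icc 1 r, u i ^ p) ^ (1 / p) :=
  shifting_inequality_general p hp0 hp2 l r hl u hdec hnonneg
end

section
/- Let p ∈ (0,1], c ≥ 0, and x* ∈ ℂⁿ. If x⊥ is a projection of x* onto F_p(c), then supp(x⊥) ⊆ supp(x*); that is, x*ᵢ = 0 implies x⊥ᵢ = 0 for every coordinate i. -/
open scoped Classical

/-! Zeroing a coordinate never increases `∑ ‖xᵢ‖ ^ p` when `0 < p`, so if `x⊥ᵢ ≠ 0 = x*ᵢ`, then
`x⊥` with its `i`-th coordinate set to `0` stays in the ball and is strictly closer to `x*`. -/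

section

variable {n : ℕ}

theorem mem_Fball {p c : ℝ} {x : Fin n → ℂ} : x ∈ Fball p c ↔ ∑ i, ‖x i‖ ^ p ≤ c := Iff.rfl

theorem update_zero_mem_Fball {p c : ℝ} (hp : 0 < p) {x : Fin n → ℂ} (hx : x ∈ Fball p c)
    (i : Fin n) : Function.update x i 0 ∈ Fball p c := by
  rw [mem_Fball] at hx ⊢
  refine (Finset.sum_le_sum fun j _ => ?_).trans hx
  rcases eq_or_ne j i with rfl | hj
  · simp only [Function.update_self, norm_zero, Real.zero_rpow hp.ne']
    positivity
  · rw [Function.update_of_ne hj]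

theorem l2norm_update_zero_lt {v : Fin n → ℂ} {i : Fin n} (hv : v i ≠ 0) :
    l2norm (Function.update v i 0) < l2norm v := by
  have hi : ‖Function.update v i 0 i‖ ^ 2 < ‖v i‖ ^ 2 := by
    simpa using pow_pos (norm_pos_iff.2 hv) 2
  refine Real.sqrt_lt_sqrt (by positivity)
    (Finset.sum_lt_sum (fun j _ => ?_) ⟨i, Finset.mem_univ i, hi⟩)
  rcases eq_or_ne j i with rfl | hj
  · simp
  · rw [Function.update_of_ne hj]

end

theorem proj_support_subset_general
    {n : ℕ} (p c : ℝ) (hp0 : 0 < p)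
    (xstar xperp : Fin n → ℂ)
    (hproj : IsProj p c xstar xperp) :
    ∀ i : Fin n, xstar i = 0 → xperp i = 0 := by
  intro i hxi
  by_contra hne
  have hcloser := hproj.2 _ (update_zero_mem_Fball hp0 hproj.1 i)
  have hdiff : xstar - Function.update xperp i 0 = Function.update (xstar - xperp) i 0 := by
    have hxstar : Function.update xstar i 0 = xstar := Function.update_eq_self_iff.2 hxi.symm
    conv_lhs => rw [← hxstar, ← Function.update_sub, sub_zero]
  rw [hdiff] at hcloser
  exact (l2norm_update_zero_lt (by simpa [hxi] : (xstar - xperp) i ≠ 0)).not_ge hcloser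

theorem proj_support_subset
    {n : ℕ} (p c : ℝ) (hp0 : 0 < p) (hp1 : p ≤ 1) (hc : 0 ≤ c)
    (xstar xperp : Fin n → ℂ)
    (hproj : IsProj p c xstar xperp) :
    ∀ i : Fin n, xstar i = 0 → xperp i = 0 :=
  proj_support_subset_general p c hp0 xstar xperp hproj
end

section
/- Let p ∈ (0,1], s ≥ 1 an integer, d ∈ ℂⁿ, and let S ⊆ {1,…,n}. Suppose S₂, S₃, …, S_m are pairwise disjoint subsets of the complement of S ∪ S₁ (where S₁ ⊆ S^c is also disjoint from S₂,…,S_m), such that S₁ ∪ S₂ ∪ ⋯ ∪ S_m = S^c, |S_j| ≤ s for all j with |S_j| = s for j < m, and for every j ≥ 1 and every i ∈ S_j, i' ∈ S_{j+1} one has |d_i| ≥ |d_{i'}|. Then Σ_{j≥2} ‖d|_{S_j}‖₂ ≤ √(2p)·(2s/(2−p))^{1/2−1/p}·‖d|_{S^c}‖_p. -/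
open scoped Classical

/-!
Write `t j = ∑_{i ∈ S_j} |d_i|^p` and `T j = (t j + ⋯ + t m)^(1/p)`, the `ℓ_p` norm of `d` on the
tail `S_j ∪ ⋯ ∪ S_m`. Every entry on `S_j` is dominated by every entry of the full block
`S_{j-1}`, so `‖d|_{S_j}‖₂² ≤ (t (j-1) / s)^((2-p)/p) · t j`. Weighted AM-GM with weights
`1 - p/2` and `p/2`, followed by superadditivity of `x ↦ x^(1/p)`, bounds the square root of this
by `C/2 · (T (j-1) - T (j+1))`, `C` being the constant of the claim, and these differences
telescope to at most `2 T 1 = 2 ‖d|_{Sᶜ}‖_p`.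
-/

theorem sum_comp_norm_restrict {n : ℕ} (g : ℝ → ℝ) (hg : g 0 = 0) (I : Finset (Fin n))
    (d : Fin n → ℂ) : ∑ i, g ‖restrict I d i‖ = ∑ i ∈ I, g ‖d i‖ := by
  simp [restrict, apply_ite, hg, Finset.sum_ite_mem]

namespace Real

theorem rpow_mul_rpow_one_sub_le {θ a b : ℝ} (hθ0 : 0 < θ) (hθ1 : θ < 1) (ha : 0 ≤ a)
    (hb : 0 ≤ b) : a ^ θ * b ^ (1 - θ) ≤ θ ^ θ * (1 - θ) ^ (1 - θ) * (a + b) := by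
  have h1θ : 0 < 1 - θ := sub_pos.2 hθ1
  have h := geom_mean_le_arith_mean2_weighted hθ0.le h1θ.le (div_nonneg ha hθ0.le)
    (div_nonneg hb h1θ.le) (add_sub_cancel θ 1)
  rw [div_rpow ha hθ0.le, div_rpow hb h1θ.le, div_mul_div_comm,
    div_le_iff₀ (by positivity), mul_div_cancel₀ a hθ0.ne', mul_div_cancel₀ b h1θ.ne'] at h
  linarith

theorem rpow_mul_rpow_one_sub_rpow_le {θ q a b v : ℝ} (hθ0 : 0 < θ) (hθ1 : θ < 1) (hq : 1 ≤ q)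
    (ha : 0 ≤ a) (hb : 0 ≤ b) (hv : 0 ≤ v) :
    (a ^ θ * b ^ (1 - θ)) ^ q ≤ (θ ^ θ * (1 - θ) ^ (1 - θ)) ^ q * ((a + b + v) ^ q - v ^ q) := by
  have h1θ : 0 < 1 - θ := sub_pos.2 hθ1
  calc (a ^ θ * b ^ (1 - θ)) ^ q ≤ (θ ^ θ * (1 - θ) ^ (1 - θ) * (a + b)) ^ q :=
        rpow_le_rpow (by positivity) (rpow_mul_rpow_one_sub_le hθ0 hθ1 ha hb) (by linarith)
    _ = (θ ^ θ * (1 - θ) ^ (1 - θ)) ^ q * (a + b) ^ q := mul_rpow (by positivity) (by positivity)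
    _ ≤ _ := by
        gcongr
        linarith [add_rpow_le_rpow_add (add_nonneg ha hb) hv hq]

end Real

open Finset in
theorem sum_sq_le_rpow_avg_mul_sum_rpow {ι : Type*} {A B : Finset ι} {f : ι → ℝ} {p : ℝ}
    (hp0 : 0 < p) (hp2 : p ≤ 2) (hf : ∀ i, 0 ≤ f i) (hA : A.Nonempty)
    (hAB : ∀ i ∈ A, ∀ i' ∈ B, f i' ≤ f i) :
    ∑ i ∈ B, f i ^ 2 ≤ ((∑ i ∈ A, f i ^ p) / #A) ^ ((2 - p) / p) * ∑ i ∈ B, f i ^ p := by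
  obtain ⟨i₀, hi₀, hmin⟩ := A.exists_min_image f hA
  have hμ : f i₀ ^ p ≤ (∑ i ∈ A, f i ^ p) / #A := by
    rw [le_div_iff₀ (by exact_mod_cast hA.card_pos), mul_comm, ← nsmul_eq_mul]
    exact A.card_nsmul_le_sum _ _ fun i hi => Real.rpow_le_rpow (hf _) (hmin i hi) hp0.le
  have hpoint : ∀ i ∈ B, f i ^ 2 ≤ f i₀ ^ (2 - p) * f i ^ p := fun i hi => by
    rw [← Real.rpow_two, ← sub_add_cancel (2 : ℝ) p, Real.rpow_add' (hf i) (by simp),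
      sub_add_cancel]
    exact mul_le_mul_of_nonneg_right (Real.rpow_le_rpow (hf i) (hAB i₀ hi₀ i hi) (by linarith))
      (Real.rpow_nonneg (hf i) p)
  calc ∑ i ∈ B, f i ^ 2 ≤ ∑ i ∈ B, f i₀ ^ (2 - p) * f i ^ p := sum_le_sum hpoint
    _ = (f i₀ ^ p) ^ ((2 - p) / p) * ∑ i ∈ B, f i ^ p := by
        rw [← mul_sum, ← Real.rpow_mul (hf i₀), mul_div_cancel₀ _ hp0.ne']
    _ ≤ _ := by
        gcongr
        exacts [sum_nonneg fun i _ => Real.rpow_nonneg (hf i) p, Real.rpow_nonneg (hf i₀) p]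

open Finset in
theorem sum_Icc_sub_sub_two_le {B : ℕ → ℝ} (hB : Antitone B) (hB0 : ∀ j, 0 ≤ B j) (m : ℕ) :
    ∑ j ∈ Icc 2 m, (B (j - 1) - B (j + 1)) ≤ 2 * B 1 := by
  rcases lt_or_ge m 2 with hm | hm
  · rw [Icc_eq_empty (by omega), sum_empty]
    linarith [hB0 1]
  have hleft := sum_Icc_sub hm fun j => B (j - 1)
  have hright := sum_Icc_sub hm B
  simp only [Nat.add_sub_cancel] at hleft
  have hsplit : ∑ j ∈ Icc 2 m, (B (j - 1) - B (j + 1))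
      = -∑ j ∈ Icc 2 m, (B j - B (j - 1)) - ∑ j ∈ Icc 2 m, (B (j + 1) - B j) := by
    rw [← sum_neg_distrib, ← sum_sub_distrib]
    exact sum_congr rfl fun j _ => by ring
  rw [hsplit, hleft, hright]
  linarith [hB0 m, hB0 (m + 1), hB (show 1 ≤ 2 by norm_num)]

open Finset in
theorem sqrt_sum_sq_le_rpow_sub {ι : Type*} {A B : Finset ι} {f : ι → ℝ} {p v : ℝ}
    (hp0 : 0 < p) (hp1 : p ≤ 1) (hf : ∀ i, 0 ≤ f i) (hA : A.Nonempty)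
    (hAB : ∀ i ∈ A, ∀ i' ∈ B, f i' ≤ f i) (hv : 0 ≤ v) :
    √(∑ i ∈ B, f i ^ 2) ≤ √(2 * p) / 2 * (2 * #A / (2 - p)) ^ ((1 : ℝ) / 2 - 1 / p) *
      ((∑ i ∈ A, f i ^ p + ∑ i ∈ B, f i ^ p + v) ^ (1 / p) - v ^ (1 / p)) := by
  set a := ∑ i ∈ A, f i ^ p
  set b := ∑ i ∈ B, f i ^ p
  set s : ℝ := ((#A : ℕ) : ℝ)
  set θ : ℝ := 1 - p / 2 with hθ
  have ha : 0 ≤ a := sum_nonneg fun i _ => Real.rpow_nonneg (hf i) p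
  have hb : 0 ≤ b := sum_nonneg fun i _ => Real.rpow_nonneg (hf i) p
  have hs : 0 < s := Nat.cast_pos.2 hA.card_pos
  have hθ0 : 0 < θ := by linarith
  have hθ1 : θ < 1 := by linarith
  have hpow : √((a / s) ^ ((2 - p) / p) * b) = (a ^ θ * b ^ (1 - θ)) ^ (1 / p) / s ^ (θ / p) := by
    rw [Real.sqrt_eq_rpow, Real.mul_rpow (by positivity) hb, ← Real.rpow_mul (by positivity),
      Real.div_rpow ha hs.le, Real.mul_rpow (by positivity) (by positivity), ← Real.rpow_mul ha,
      ← Real.rpow_mul hb]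
    rw [show (2 - p) / p * (1 / 2) = θ / p by rw [hθ]; field_simp,
      show θ * (1 / p) = θ / p by ring, show (1 - θ) * (1 / p) = 1 / 2 by rw [hθ]; field_simp; ring]
    ring
  have hconst : (θ ^ θ * (1 - θ) ^ (1 - θ)) ^ (1 / p) / s ^ (θ / p)
      = √(2 * p) / 2 * (2 * s / (2 - p)) ^ ((1 : ℝ) / 2 - 1 / p) := by
    have h1θ : 1 - θ = p / 2 := by ring
    have hsqrt : √(2 * p) = 2 * √(p / 2) := by
      rw [show 2 * p = 2 ^ 2 * (p / 2) by ring, Real.sqrt_mul (by positivity), Real.sqrt_sq zero_le_two]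
    rw [h1θ, Real.mul_rpow (by positivity) (by positivity), ← Real.rpow_mul hθ0.le,
      ← Real.rpow_mul (by positivity), show p / 2 * (1 / p) = 1 / 2 by field_simp, ← Real.sqrt_eq_rpow,
      show 2 * s / (2 - p) = (θ / s)⁻¹ by rw [hθ, inv_div]; field_simp,
      show (1 : ℝ) / 2 - 1 / p = -(θ * (1 / p)) by rw [hθ]; field_simp; ring,
      Real.inv_rpow (by positivity), Real.rpow_neg (by positivity), inv_inv,
      Real.div_rpow hθ0.le hs.le, hsqrt, mul_one_div]
    ring
  calc √(∑ i ∈ B, f i ^ 2) ≤ √((a / s) ^ ((2 - p) / p) * b) :=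
        Real.sqrt_le_sqrt (sum_sq_le_rpow_avg_mul_sum_rpow hp0 (by linarith) hf hA hAB)
    _ = (a ^ θ * b ^ (1 - θ)) ^ (1 / p) / s ^ (θ / p) := hpow
    _ ≤ (θ ^ θ * (1 - θ) ^ (1 - θ)) ^ (1 / p) * ((a + b + v) ^ (1 / p) - v ^ (1 / p)) /
          s ^ (θ / p) := by
        gcongr
        exact Real.rpow_mul_rpow_one_sub_rpow_le hθ0 hθ1 (by rw [le_div_iff₀ hp0]; linarith) ha hb hv
    _ = _ := by rw [← hconst]; ring

theorem lpnorm_restrict_biUnion {n : ℕ} {κ : Type*} {p : ℝ} (hp0 : 0 < p) (J : Finset κ)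
    (I : κ → Finset (Fin n)) (hI : (J : Set κ).PairwiseDisjoint I) (d : Fin n → ℂ) :
    lpnorm p (restrict (J.biUnion I) d) = (∑ j ∈ J, ∑ i ∈ I j, ‖d i‖ ^ p) ^ (1 / p) := by
  rw [lpnorm, sum_comp_norm_restrict (· ^ p) (Real.zero_rpow hp0.ne'), Finset.sum_biUnion hI]

theorem l2norm_restrict {n : ℕ} (I : Finset (Fin n)) (d : Fin n → ℂ) :
    l2norm (restrict I d) = √(∑ i ∈ I, ‖d i‖ ^ 2) := by
  rw [l2norm, sum_comp_norm_restrict (· ^ 2) (zero_pow two_ne_zero)]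

noncomputable def tailLpNorm {n : ℕ} (p : ℝ) (d : Fin n → ℂ) (SS : ℕ → Finset (Fin n))
    (m j : ℕ) : ℝ :=
  (∑ l ∈ Finset.Icc j m, ∑ i ∈ SS l, ‖d i‖ ^ p) ^ (1 / p)

section tailLpNorm

open Finset

variable {n : ℕ} {p : ℝ} (d : Fin n → ℂ) (SS : ℕ → Finset (Fin n)) (m : ℕ)

theorem tailLpNorm_nonneg (j : ℕ) : 0 ≤ tailLpNorm p d SS m j := by
  unfold tailLpNorm
  positivity

theorem tailLpNorm_antitone (hp : 0 ≤ p) : Antitone (tailLpNorm p d SS m) := fun j k hjk =>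
  Real.rpow_le_rpow (by positivity)
    (sum_le_sum_of_subset_of_nonneg (Icc_subset_Icc_left hjk) fun _ _ _ => by positivity)
    (by positivity)

theorem l2norm_restrict_le_tailLpNorm_sub (hp0 : 0 < p) (hp1 : p ≤ 1) {s : ℕ} (hs : 1 ≤ s)
    {j : ℕ} (hj2 : 2 ≤ j) (hjm : j ≤ m) (hcard : #(SS (j - 1)) = s)
    (hord : ∀ i ∈ SS (j - 1), ∀ i' ∈ SS j, ‖d i'‖ ≤ ‖d i‖) :
    l2norm (restrict (SS j) d) ≤ √(2 * p) / 2 * (2 * s / (2 - p)) ^ ((1 : ℝ) / 2 - 1 / p) *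
      (tailLpNorm p d SS m (j - 1) - tailLpNorm p d SS m (j + 1)) := by
  set t : ℕ → ℝ := fun k => ∑ i ∈ SS k, ‖d i‖ ^ p
  have hsplit : ∑ l ∈ Icc (j - 1) m, t l = t (j - 1) + t j + ∑ l ∈ Icc (j + 1) m, t l := by
    rw [← add_sum_Ioc_eq_sum_Icc (by omega), ← Icc_add_one_left_eq_Ioc,
      Nat.sub_add_cancel (by omega), ← add_sum_Ioc_eq_sum_Icc hjm, ← Icc_add_one_left_eq_Ioc,
      add_assoc]
  have h := sqrt_sum_sq_le_rpow_sub hp0 hp1 (fun i => norm_nonneg (d i)) (card_pos.1 (by omega))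
    hord (by positivity : 0 ≤ ∑ l ∈ Icc (j + 1) m, t l)
  rw [l2norm_restrict]
  simpa [tailLpNorm, t, hsplit, hcard] using h

end tailLpNorm

open Finset in
theorem tail_blocks_l2_lp_bound_general
    {n : ℕ} (p : ℝ) (hp0 : 0 < p) (hp1 : p ≤ 1)
    (s : ℕ) (hs : 1 ≤ s) (d : Fin n → ℂ)
    (S : Finset (Fin n)) (m : ℕ) (SS : ℕ → Finset (Fin n))
    (hdisj : ∀ j j' : ℕ, 1 ≤ j → j < j' → j' ≤ m → Disjoint (SS j) (SS j'))
    (hcover : Sᶜ = (Finset.Icc 1 m).biUnion SS)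
    (hfull : ∀ j : ℕ, 1 ≤ j → j < m → (SS j).card = s)
    (horder : ∀ j : ℕ, 1 ≤ j → j + 1 ≤ m →
      ∀ i ∈ SS j, ∀ i' ∈ SS (j + 1), ‖d i'‖ ≤ ‖d i‖) :
    ∑ j ∈ Finset.Icc 2 m, l2norm (restrict (SS j) d) ≤
      Real.sqrt (2 * p) * (2 * (s : ℝ) / (2 - p)) ^ ((1 : ℝ) / 2 - 1 / p) *
        lpnorm p (restrict Sᶜ d) := by
  set C := Real.sqrt (2 * p) * (2 * (s : ℝ) / (2 - p)) ^ ((1 : ℝ) / 2 - 1 / p)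
  set T := tailLpNorm p d SS m
  have hlp : lpnorm p (restrict Sᶜ d) = T 1 := by
    refine hcover ▸ lpnorm_restrict_biUnion hp0 _ _ (fun j hj k hk hjk => ?_) d
    simp only [coe_Icc, Set.mem_Icc] at hj hk
    rcases hjk.lt_or_gt with h | h
    exacts [hdisj j k hj.1 h hk.2, (hdisj k j hk.1 h hj.2).symm]
  have hblock : ∀ j ∈ Icc 2 m, l2norm (restrict (SS j) d) ≤ C / 2 * (T (j - 1) - T (j + 1)) := by
    intro j hj
    obtain ⟨hj2, hjm⟩ := mem_Icc.1 hj
    have hord := horder (j - 1) (by omega) (by omega)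
    rw [Nat.sub_add_cancel (by omega)] at hord
    simpa only [C, mul_div_right_comm] using l2norm_restrict_le_tailLpNorm_sub d SS m hp0 hp1 hs
      hj2 hjm (hfull (j - 1) (by omega) (by omega)) hord
  have h2p : 0 < 2 - p := by linarith
  calc ∑ j ∈ Icc 2 m, l2norm (restrict (SS j) d)
      ≤ ∑ j ∈ Icc 2 m, C / 2 * (T (j - 1) - T (j + 1)) := sum_le_sum hblock
    _ = C / 2 * ∑ j ∈ Icc 2 m, (T (j - 1) - T (j + 1)) := (mul_sum _ _ _).symm
    _ ≤ C / 2 * (2 * T 1) := by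
        gcongr
        exact sum_Icc_sub_sub_two_le (tailLpNorm_antitone d SS m hp0.le)
          (tailLpNorm_nonneg d SS m) m
    _ = C * lpnorm p (restrict Sᶜ d) := by rw [hlp]; ring

theorem tail_blocks_l2_lp_bound
    {n : ℕ} (p : ℝ) (hp0 : 0 < p) (hp1 : p ≤ 1)
    (s : ℕ) (hs : 1 ≤ s) (d : Fin n → ℂ)
    (S : Finset (Fin n)) (m : ℕ) (SS : ℕ → Finset (Fin n))
    (hsub : ∀ j : ℕ, 1 ≤ j → j ≤ m → SS j ⊆ Sᶜ)
    (hdisj : ∀ j j' : ℕ, 1 ≤ j → j < j' → j' ≤ m → Disjoint (SS j) (SS j'))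
    (hcover : Sᶜ = (Finset.Icc 1 m).biUnion SS)
    (hcard : ∀ j : ℕ, 1 ≤ j → j ≤ m → (SS j).card ≤ s)
    (hfull : ∀ j : ℕ, 1 ≤ j → j < m → (SS j).card = s)
    (horder : ∀ j : ℕ, 1 ≤ j → j + 1 ≤ m →
      ∀ i ∈ SS j, ∀ i' ∈ SS (j + 1), ‖d i'‖ ≤ ‖d i‖) :
    ∑ j ∈ Finset.Icc 2 m, l2norm (restrict (SS j) d) ≤
      Real.sqrt (2 * p) * (2 * (s : ℝ) / (2 - p)) ^ ((1 : ℝ) / 2 - 1 / p) *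
        lpnorm p (restrict Sᶜ d) :=
  tail_blocks_l2_lp_bound_general p hp0 hp1 s hs d S m SS hdisj hcover hfull horder
end

section
/- Let p ∈ (0,1], let x⊥ ∈ ℂⁿ with supp(x⊥) ⊆ S where S ⊆ {1,…,n} has |S| = s ≥ 1, and let x ∈ ℂⁿ satisfy ‖x‖_p^p ≤ ‖x⊥‖_p^p. Then the vector d = x − x⊥ satisfies ‖d|_{S^c}‖_p ≤ s^{1/p − 1/2}·‖d|_S‖₂. -/
open scoped Classical

/-!
Off `S` the error `d = x - x⊥` coincides with `x`, so `‖x‖_p^p ≤ ‖x⊥‖_p^p` and the `p`-triangle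
inequality `|x⊥ᵢ|^p ≤ |dᵢ|^p + |xᵢ|^p` on `S` give `‖d|_{Sᶜ}‖_p ≤ ‖d|_S‖_p`. Hölder's inequality
on the `s` coordinates of `S` then bounds `‖d|_S‖_p` by `s^{1/p - 1/2} ‖d|_S‖_2`.
-/

section

open Finset

lemma norm_rpow_le_norm_sub_rpow_add {E : Type*} [SeminormedAddGroup E] {p : ℝ}
    (hp0 : 0 ≤ p) (hp1 : p ≤ 1) (a b : E) : ‖a‖ ^ p ≤ ‖a - b‖ ^ p + ‖b‖ ^ p := by
  have key : ‖a‖₊ ^ p ≤ ‖a - b‖₊ ^ p + ‖b‖₊ ^ p :=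
    calc ‖a‖₊ ^ p ≤ (‖a - b‖₊ + ‖b‖₊) ^ p := by
          gcongr
          simpa using nnnorm_add_le (a - b) b
      _ ≤ ‖a - b‖₊ ^ p + ‖b‖₊ ^ p := NNReal.rpow_add_le_add_rpow _ _ hp0 hp1
  exact_mod_cast key

lemma sum_compl_norm_sub_rpow_le {ι E : Type*} [Fintype ι] [DecidableEq ι]
    [SeminormedAddCommGroup E] {p : ℝ} (hp0 : 0 < p) (hp1 : p ≤ 1) (S : Finset ι) {x y : ι → E}
    (hy : ∀ i ∉ S, y i = 0) (hxy : ∑ i, ‖x i‖ ^ p ≤ ∑ i, ‖y i‖ ^ p) :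
    ∑ i ∈ Sᶜ, ‖x i - y i‖ ^ p ≤ ∑ i ∈ S, ‖x i - y i‖ ^ p := by
  have hx := sum_add_sum_compl S fun i => ‖x i‖ ^ p
  have hy' := sum_add_sum_compl S fun i => ‖y i‖ ^ p
  have hy_compl : ∑ i ∈ Sᶜ, ‖y i‖ ^ p = 0 :=
    sum_eq_zero fun i hi => by simp [hy i (mem_compl.mp hi), Real.zero_rpow hp0.ne']
  have hxy_compl : ∑ i ∈ Sᶜ, ‖x i - y i‖ ^ p = ∑ i ∈ Sᶜ, ‖x i‖ ^ p :=
    sum_congr rfl fun i hi => by simp [hy i (mem_compl.mp hi)]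
  have hy_S : ∑ i ∈ S, ‖y i‖ ^ p ≤ ∑ i ∈ S, ‖x i - y i‖ ^ p + ∑ i ∈ S, ‖x i‖ ^ p := by
    rw [← sum_add_distrib]
    refine sum_le_sum fun i _ => ?_
    simpa [norm_sub_rev] using norm_rpow_le_norm_sub_rpow_add hp0.le hp1 (y i) (x i)
  linarith

lemma sum_rpow_le_card_rpow_mul_sum_rpow {ι : Type*} (s : Finset ι) {p q : ℝ} (hp : 0 < p)
    (hpq : p ≤ q) {f : ι → ℝ} (hf : ∀ i, 0 ≤ f i) :
    ∑ i ∈ s, f i ^ p ≤ (#s : ℝ) ^ (1 - p / q) * (∑ i ∈ s, f i ^ q) ^ (p / q) := by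
  have holder := Real.inner_le_weight_mul_Lp_of_nonneg s ((one_le_div hp).mpr hpq) (fun _ => 1)
    (fun i => f i ^ p) (fun _ => zero_le_one) fun i => Real.rpow_nonneg (hf i) p
  have hpow : ∀ i, (f i ^ p) ^ (q / p) = f i ^ q := fun i => by
    rw [← Real.rpow_mul (hf i), mul_div_cancel₀ q hp.ne']
  simpa only [one_mul, sum_const, nsmul_eq_mul, mul_one, inv_div, hpow] using holder

lemma sum_rpow_rpow_le_card_rpow_mul {ι : Type*} (s : Finset ι) {p q : ℝ} (hp : 0 < p)
    (hpq : p ≤ q) {f : ι → ℝ} (hf : ∀ i, 0 ≤ f i) :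
    (∑ i ∈ s, f i ^ p) ^ (1 / p) ≤ (#s : ℝ) ^ (1 / p - 1 / q) * (∑ i ∈ s, f i ^ q) ^ (1 / q) := by
  have hcard : (0 : ℝ) ≤ #s := Nat.cast_nonneg _
  have hsum : 0 ≤ ∑ i ∈ s, f i ^ q := sum_nonneg fun i _ => Real.rpow_nonneg (hf i) q
  calc (∑ i ∈ s, f i ^ p) ^ (1 / p)
      ≤ ((#s : ℝ) ^ (1 - p / q) * (∑ i ∈ s, f i ^ q) ^ (p / q)) ^ (1 / p) := by
        gcongr
        · exact sum_nonneg fun i _ => Real.rpow_nonneg (hf i) p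
        · exact sum_rpow_le_card_rpow_mul_sum_rpow s hp hpq hf
    _ = (#s : ℝ) ^ (1 / p - 1 / q) * (∑ i ∈ s, f i ^ q) ^ (1 / q) := by
        rw [Real.mul_rpow (by positivity) (by positivity), ← Real.rpow_mul hcard,
          ← Real.rpow_mul hsum]
        congr 2 <;> field_simp

end

lemma sum_restrict {n : ℕ} {M : Type*} [AddCommMonoid M] (I : Finset (Fin n))
    (v : Fin n → ℂ) {g : ℂ → M} (hg : g 0 = 0) :
    ∑ i, g (restrict I v i) = ∑ i ∈ I, g (v i) := by
  simp only [restrict, apply_ite g, hg, Finset.sum_ite_mem, Finset.univ_inter]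

theorem lp_l2_feasible_bound_general
    {n : ℕ} (p : ℝ) (hp0 : 0 < p) (hp1 : p ≤ 1)
    (s : ℕ) (S : Finset (Fin n)) (hScard : S.card = s)
    (xperp x : Fin n → ℂ)
    (hsupp : ∀ i : Fin n, xperp i ≠ 0 → i ∈ S)
    (hfeas : lpPow p x ≤ lpPow p xperp) :
    lpnorm p (restrict Sᶜ (x - xperp)) ≤
      (s : ℝ) ^ ((1 : ℝ) / p - 1 / 2) * l2norm (restrict S (x - xperp)) := by
  have hcone : ∑ i ∈ Sᶜ, ‖(x - xperp) i‖ ^ p ≤ ∑ i ∈ S, ‖(x - xperp) i‖ ^ p :=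
    sum_compl_norm_sub_rpow_le hp0 hp1 S (fun i => not_imp_comm.mp (hsupp i)) hfeas
  rw [lpnorm, l2norm, sum_restrict (g := fun z : ℂ => ‖z‖ ^ p) _ _ (by simp [hp0.ne']),
    sum_restrict (g := fun z : ℂ => ‖z‖ ^ 2) _ _ (by simp), Real.sqrt_eq_rpow, ← hScard]
  calc (∑ i ∈ Sᶜ, ‖(x - xperp) i‖ ^ p) ^ (1 / p)
      ≤ (∑ i ∈ S, ‖(x - xperp) i‖ ^ p) ^ (1 / p) :=
        Real.rpow_le_rpow (by positivity) hcone (by positivity)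
    _ ≤ (S.card : ℝ) ^ (1 / p - 1 / 2) * (∑ i ∈ S, ‖(x - xperp) i‖ ^ (2 : ℝ)) ^ (1 / 2 : ℝ) :=
        sum_rpow_rpow_le_card_rpow_mul S hp0 (by linarith) fun i => norm_nonneg _
    _ = (S.card : ℝ) ^ (1 / p - 1 / 2) * (∑ i ∈ S, ‖(x - xperp) i‖ ^ 2) ^ (1 / 2 : ℝ) := by
        simp only [Real.rpow_two]

theorem lp_l2_feasible_bound
    {n : ℕ} (p : ℝ) (hp0 : 0 < p) (hp1 : p ≤ 1)
    (s : ℕ) (hs : 1 ≤ s) (S : Finset (Fin n)) (hScard : S.card = s)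
    (xperp x : Fin n → ℂ)
    (hsupp : ∀ i : Fin n, xperp i ≠ 0 → i ∈ S)
    (hfeas : lpPow p x ≤ lpPow p xperp) :
    lpnorm p (restrict Sᶜ (x - xperp)) ≤
      (s : ℝ) ^ ((1 : ℝ) / p - 1 / 2) * l2norm (restrict S (x - xperp)) :=
  lp_l2_feasible_bound_general p hp0 hp1 s S hScard xperp x hsupp hfeas
end

section
/- Let p ∈ (0,1], c > 0, let x ∈ ℝⁿ have nonnegative entries, and let x⊥ be a projection of x onto F_p(c) with nonnegative entries. Then there exists λ ≥ 0 such that for every index i in the support of x⊥ one has (x⊥ᵢ)^{1−p}·(xᵢ − x⊥ᵢ) = p·λ. -/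
open scoped Classical

/-! On the nonnegative orthant the projection minimises `∑ (x k - u k) ^ 2` subject to
`∑ u k ^ p ≤ c`. Trading `t` units of `p`-th-power mass between two support coordinates `i`, `j`
keeps the constraint value fixed, so `t = 0` is a local minimum of the resulting one-variable
function; its vanishing derivative says that `y i ^ (1 - p) * (x i - y i)` is the same on the whole
support. This common value is nonnegative because a support coordinate with `y i > x i` could be
lowered to `max (x i) 0`, staying feasible and moving closer to `x`. -/

open Function

section NonnegLpBall

variable {ι : Type*} [Fintype ι] [DecidableEq ι]

theorem sum_apply_update (F : ι → ℝ → ℝ) (y : ι → ℝ) (i : ι) (v : ℝ) :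
    ∑ k, F k (update y i v k) = ∑ k, F k (y k) - F i (y i) + F i v := by
  simp only [apply_update F y i v]
  rw [Finset.sum_update_of_mem (Finset.mem_univ i), Finset.sdiff_singleton_eq_erase,
    ← Finset.add_sum_erase _ _ (Finset.mem_univ i)]
  ring

def nonnegLpBall (p c : ℝ) : Set (ι → ℝ) :=
  {u | 0 ≤ u ∧ ∑ k, u k ^ p ≤ c}

variable {p c : ℝ} {x y : ι → ℝ}

theorem le_of_isMinOn_nonnegLpBall (hp : 0 ≤ p)
    (hmin : IsMinOn (fun u => ∑ k, (x k - u k) ^ 2) (nonnegLpBall p c) y)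
    (hy : y ∈ nonnegLpBall p c) {i : ι} (hi : y i ≠ 0) : y i ≤ x i := by
  by_contra! hlt
  set v := max (x i) 0 with hvdef
  have hv : 0 ≤ v := le_max_right _ _
  have hvy : v ≤ y i := max_le hlt.le (hy.1 i)
  have hmem : update y i v ∈ nonnegLpBall p c := by
    refine ⟨le_update_iff.2 ⟨hv, fun k _ => hy.1 k⟩, ?_⟩
    calc ∑ k, update y i v k ^ p = ∑ k, y k ^ p - y i ^ p + v ^ p :=
          sum_apply_update (fun _ t => t ^ p) y i v
      _ ≤ ∑ k, y k ^ p := by linarith [Real.rpow_le_rpow hv hvy hp]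
      _ ≤ c := hy.2
  have hcloser : (x i - y i) ^ 2 ≤ (x i - v) ^ 2 := by
    have h := isMinOn_iff.1 hmin _ hmem
    have hsum := sum_apply_update (fun k t => (x k - t) ^ 2) y i v
    beta_reduce at h hsum
    linarith
  have hyi : 0 < y i := (hy.1 i).lt_of_ne' hi
  rcases max_cases (x i) 0 with ⟨hv', _⟩ | ⟨hv', _⟩ <;> rw [hvdef, hv'] at hcloser <;> nlinarith

theorem hasDerivAt_sq_sub_rpow_inv (hp : p ≠ 0) (a : ℝ) {t : ℝ} (ht : 0 < t) :
    HasDerivAt (fun s => (a - s ^ p⁻¹) ^ 2) (-(2 / p) * (t ^ (1 - p) * (a - t))) (t ^ p) := by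
  have hroot := Real.hasDerivAt_rpow_const (p := p⁻¹) (Or.inl (Real.rpow_pos_of_pos ht p).ne')
  refine (((hasDerivAt_const _ a).sub hroot).pow 2).congr_deriv ?_
  have hexp : p * (p⁻¹ - 1) = 1 - p := by field_simp
  rw [← Real.rpow_mul ht.le, hexp, Pi.sub_apply, Real.rpow_rpow_inv ht.le hp]
  field_simp
  ring

theorem isLocalMin_of_isMinOn_nonnegLpBall (hp : p ≠ 0)
    (hmin : IsMinOn (fun u => ∑ k, (x k - u k) ^ 2) (nonnegLpBall p c) y)
    (hy : y ∈ nonnegLpBall p c) {i j : ι} (hij : i ≠ j) (hi : 0 < y i) (hj : 0 < y j) :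
    IsLocalMin (fun t => (x i - (y i ^ p + t) ^ p⁻¹) ^ 2 + (x j - (y j ^ p - t) ^ p⁻¹) ^ 2) 0 := by
  have hnhds : Set.Ioo (-(y i ^ p)) (y j ^ p) ∈ nhds (0 : ℝ) :=
    Ioo_mem_nhds (neg_neg_of_pos (Real.rpow_pos_of_pos hi p)) (Real.rpow_pos_of_pos hj p)
  filter_upwards [hnhds] with t ⟨hti, htj⟩
  -- `ui ^ p + uj ^ p = y i ^ p + y j ^ p`, so the perturbed point stays in the ball.
  set ui := (y i ^ p + t) ^ p⁻¹
  set uj := (y j ^ p - t) ^ p⁻¹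
  have hui : 0 ≤ ui := Real.rpow_nonneg (by linarith) _
  have huj : 0 ≤ uj := Real.rpow_nonneg (by linarith) _
  have hsum (F : ι → ℝ → ℝ) : ∑ k, F k (update (update y i ui) j uj k) =
      ∑ k, F k (y k) - F i (y i) + F i ui - F j (y j) + F j uj := by
    rw [sum_apply_update, sum_apply_update, update_of_ne hij.symm]
  have hmem : update (update y i ui) j uj ∈ nonnegLpBall p c := by
    have hnonneg : 0 ≤ update y i ui := le_update_iff.2 ⟨hui, fun k _ => hy.1 k⟩
    refine ⟨le_update_iff.2 ⟨huj, fun k _ => hnonneg k⟩, ?_⟩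
    have hsum_pow := hsum fun _ s => s ^ p
    beta_reduce at hsum_pow
    rw [hsum_pow, Real.rpow_inv_rpow (by linarith) hp, Real.rpow_inv_rpow (by linarith) hp]
    linarith [hy.2]
  have hcloser := isMinOn_iff.1 hmin _ hmem
  have hsum_sq := hsum fun k s => (x k - s) ^ 2
  beta_reduce at hcloser hsum_sq
  simp only [add_zero, sub_zero, Real.rpow_rpow_inv hi.le hp, Real.rpow_rpow_inv hj.le hp]
  linarith

theorem rpow_one_sub_mul_sub_eq_of_isMinOn_nonnegLpBall (hp : p ≠ 0)
    (hmin : IsMinOn (fun u => ∑ k, (x k - u k) ^ 2) (nonnegLpBall p c) y)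
    (hy : y ∈ nonnegLpBall p c) {i j : ι} (hi : y i ≠ 0) (hj : y j ≠ 0) :
    y i ^ (1 - p) * (x i - y i) = y j ^ (1 - p) * (x j - y j) := by
  rcases eq_or_ne i j with rfl | hij
  · rfl
  have hi' : 0 < y i := (hy.1 i).lt_of_ne' hi
  have hj' : 0 < y j := (hy.1 j).lt_of_ne' hj
  have hderiv_i := hasDerivAt_sq_sub_rpow_inv hp (x i) hi'
  have hderiv_j := hasDerivAt_sq_sub_rpow_inv hp (x j) hj'
  rw [← add_zero (y i ^ p)] at hderiv_i
  rw [← sub_zero (y j ^ p)] at hderiv_j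
  have hcrit := (isLocalMin_of_isMinOn_nonnegLpBall hp hmin hy hij hi' hj').hasDerivAt_eq_zero
    ((hderiv_i.comp_const_add _ _).add (hderiv_j.comp_const_sub _ _))
  field_simp at hcrit
  linarith

end NonnegLpBall

section ComplexEmbedding

variable {n : ℕ} {p c : ℝ}

theorem ofReal_mem_Fball_iff {v : Fin n → ℝ} (hv : 0 ≤ v) :
    (fun i => (v i : ℂ)) ∈ Fball p c ↔ v ∈ nonnegLpBall p c := by
  simp only [Fball, nonnegLpBall, Set.mem_ofPred_eq, Complex.norm_real, Real.norm_eq_abs,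
    abs_of_nonneg (hv _), hv, true_and]

theorem l2norm_ofReal_sub (x v : Fin n → ℝ) :
    l2norm ((fun i => (x i : ℂ)) - fun i => (v i : ℂ)) = √(∑ i, (x i - v i) ^ 2) := by
  simp [l2norm, ← Complex.ofReal_sub, sq_abs]

theorem IsProj.isMinOn_nonnegLpBall {x xp : Fin n → ℝ}
    (hproj : IsProj p c (fun i => (x i : ℂ)) (fun i => (xp i : ℂ))) :
    IsMinOn (fun u => ∑ k, (x k - u k) ^ 2) (nonnegLpBall p c) xp := by
  refine isMinOn_iff.2 fun u hu => ?_
  have h := hproj.2 _ ((ofReal_mem_Fball_iff hu.1).2 hu)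
  rw [l2norm_ofReal_sub, l2norm_ofReal_sub] at h
  exact (Real.sqrt_le_sqrt_iff (by positivity)).1 h

end ComplexEmbedding

theorem lagrange_condition_on_support_general
    {n : ℕ} (p c : ℝ) (hp0 : 0 < p)
    (x xp : Fin n → ℝ) (hxp : ∀ i, 0 ≤ xp i)
    (hproj : IsProj p c (fun i => (x i : ℂ)) (fun i => (xp i : ℂ))) :
    ∃ lam : ℝ, 0 ≤ lam ∧
      ∀ i : Fin n, xp i ≠ 0 → xp i ^ ((1 : ℝ) - p) * (x i - xp i) = p * lam := by
  have hmem : xp ∈ nonnegLpBall p c := (ofReal_mem_Fball_iff hxp).1 hproj.1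
  have hmin := hproj.isMinOn_nonnegLpBall
  by_cases hsupp : ∃ j, xp j ≠ 0
  · obtain ⟨j, hj⟩ := hsupp
    have hxj := le_of_isMinOn_nonnegLpBall hp0.le hmin hmem hj
    refine ⟨xp j ^ (1 - p) * (x j - xp j) / p,
      div_nonneg (mul_nonneg (Real.rpow_nonneg (hxp j) _) (sub_nonneg.2 hxj)) hp0.le,
      fun i hi => ?_⟩
    rw [rpow_one_sub_mul_sub_eq_of_isMinOn_nonnegLpBall hp0.ne' hmin hmem hi hj]
    field_simp
  · exact ⟨0, le_rfl, fun i hi => (hsupp ⟨i, hi⟩).elim⟩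

theorem lagrange_condition_on_support
    {n : ℕ} (p c : ℝ) (hp0 : 0 < p) (hp1 : p ≤ 1) (hc : 0 < c)
    (x xp : Fin n → ℝ) (hx : ∀ i, 0 ≤ x i) (hxp : ∀ i, 0 ≤ xp i)
    (hproj : IsProj p c (fun i => (x i : ℂ)) (fun i => (xp i : ℂ))) :
    ∃ lam : ℝ, 0 ≤ lam ∧
      ∀ i : Fin n, xp i ≠ 0 → xp i ^ ((1 : ℝ) - p) * (x i - xp i) = p * lam :=
  lagrange_condition_on_support_general p c hp0 x xp hxp hproj
end

section
/- Let p ∈ (0,1), λ > 0, set T₀ = (2−p)·(p·(1−p)^{p−1}·λ)^{1/(2−p)}, let T > T₀, and define h_p(t) = t^{1−p}·(T − t) for t > 0. Then the equation h_p(t) = p·λ has exactly two solutions in (0, ∞): a unique t₋ ∈ (0, (1−p)T/(2−p)) and a unique t₊ ∈ ((1−p)T/(2−p), T). -/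
open scoped Classical

/-! For `a > 0` the function `t ↦ t ^ a * (T - t)` vanishes at `0` and `T`, has derivative
`t ^ (a - 1) * (a * (T - t) - t)` on `t > 0`, and so increases strictly up to `a * T / (a + 1)` and
decreases strictly after it. Its maximum `a ^ a * T ^ (a + 1) / (a + 1) ^ (a + 1)` exceeds `c > 0`
exactly when `T` exceeds `(a + 1) * (c * a ^ (-a)) ^ (1 / (a + 1))`; the intermediate value theorem
then gives one root of `t ^ a * (T - t) = c` on each side of the maximum, and strict monotonicity
rules out any other root in `(0, ∞)`. The theorem is the case `a = 1 - p`, `c = p * lam`. -/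

open Set

/-- For `a = 1 - p` this is the paper's `h_p`. -/
noncomputable def powMulSub (a T t : ℝ) : ℝ := t ^ a * (T - t)

section powMulSub

variable {a T c : ℝ}

theorem continuous_powMulSub (ha : 0 ≤ a) : Continuous (powMulSub a T) :=
  (Real.continuous_rpow_const ha).mul (continuous_const.sub continuous_id)

theorem hasDerivAt_powMulSub {x : ℝ} (hx : 0 < x) :
    HasDerivAt (powMulSub a T) (x ^ (a - 1) * (a * (T - x) - x)) x := by
  have h := (Real.hasDerivAt_rpow_const (p := a) (Or.inl hx.ne')).mul
    ((hasDerivAt_id x).const_sub T)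
  refine h.congr_deriv ?_
  simp only [id]
  rw [show x ^ a = x ^ (a - 1) * x by rw [← Real.rpow_add_one hx.ne', sub_add_cancel]]
  ring

theorem powMulSub_zero (ha : a ≠ 0) : powMulSub a T 0 = 0 := by
  simp [powMulSub, Real.zero_rpow ha]

theorem powMulSub_self : powMulSub a T T = 0 := by
  simp [powMulSub]

theorem powMulSub_nonpos {t : ℝ} (ht : 0 ≤ t) (hTt : T ≤ t) : powMulSub a T t ≤ 0 :=
  mul_nonpos_of_nonneg_of_nonpos (Real.rpow_nonneg ht a) (sub_nonpos.mpr hTt)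

theorem strictMonoOn_powMulSub (ha : 0 < a) :
    StrictMonoOn (powMulSub a T) (Icc 0 (a * T / (a + 1))) := by
  refine strictMonoOn_of_deriv_pos (convex_Icc _ _) (continuous_powMulSub ha.le).continuousOn ?_
  rw [interior_Icc]
  rintro x ⟨hx0, hxm⟩
  rw [lt_div_iff₀ (by linarith)] at hxm
  rw [(hasDerivAt_powMulSub hx0).deriv]
  exact mul_pos (Real.rpow_pos_of_pos hx0 _) (by linarith)

theorem strictAntiOn_powMulSub (ha : 0 < a) (hT : 0 ≤ T) :
    StrictAntiOn (powMulSub a T) (Icc (a * T / (a + 1)) T) := by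
  refine strictAntiOn_of_deriv_neg (convex_Icc _ _) (continuous_powMulSub ha.le).continuousOn ?_
  rw [interior_Icc]
  rintro x ⟨hmx, -⟩
  have hx0 : 0 < x := lt_of_le_of_lt (by positivity) hmx
  rw [div_lt_iff₀ (by linarith)] at hmx
  rw [(hasDerivAt_powMulSub hx0).deriv]
  exact mul_neg_of_pos_of_neg (Real.rpow_pos_of_pos hx0 _) (by linarith)

theorem powMulSub_argmax (ha : 0 ≤ a) (hT : 0 ≤ T) :
    powMulSub a T (a * T / (a + 1)) = a ^ a * T ^ (a + 1) / (a + 1) ^ (a + 1) := by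
  have ha1 : 0 < a + 1 := by linarith
  have hTm : T - a * T / (a + 1) = T / (a + 1) := by field_simp; ring
  rw [powMulSub, hTm, Real.div_rpow (by positivity) ha1.le, Real.mul_rpow ha hT,
    Real.rpow_add_one' hT ha1.ne', Real.rpow_add_one ha1.ne']
  field_simp

theorem lt_powMulSub_argmax (ha : 0 < a) (hc : 0 < c)
    (hT : (a + 1) * (c * a ^ (-a)) ^ (1 / (a + 1)) < T) :
    c < powMulSub a T (a * T / (a + 1)) := by
  have ha1 : 0 < a + 1 := by linarith
  have hT0 : 0 ≤ (a + 1) * (c * a ^ (-a)) ^ (1 / (a + 1)) := by positivity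
  have hpow := Real.rpow_lt_rpow hT0 hT ha1
  rw [Real.mul_rpow ha1.le (by positivity), ← Real.rpow_mul (by positivity),
    one_div_mul_cancel ha1.ne', Real.rpow_one, Real.rpow_neg ha.le] at hpow
  rw [powMulSub_argmax ha.le (hT0.trans hT.le), lt_div_iff₀ (by positivity)]
  have hapow : 0 < a ^ a := by positivity
  calc c * (a + 1) ^ (a + 1) = a ^ a * ((a + 1) ^ (a + 1) * (c * (a ^ a)⁻¹)) := by
        field_simp
    _ < a ^ a * T ^ (a + 1) := mul_lt_mul_of_pos_left hpow hapow

theorem exists_two_roots_powMulSub_eq (ha : 0 < a) (hc : 0 < c) (hT : 0 < T)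
    (hmax : c < powMulSub a T (a * T / (a + 1))) :
    ∃ tm tp : ℝ,
      0 < tm ∧ tm < a * T / (a + 1) ∧ a * T / (a + 1) < tp ∧ tp < T ∧
      powMulSub a T tm = c ∧ powMulSub a T tp = c ∧
      ∀ t : ℝ, 0 < t → powMulSub a T t = c → t = tm ∨ t = tp := by
  set m := a * T / (a + 1)
  have hm0 : 0 < m := by positivity
  have hmT : m < T := by rw [div_lt_iff₀ (by linarith)]; linarith
  have hf : Continuous (powMulSub a T) := continuous_powMulSub ha.le
  have hc0 : c ∈ Ioo (powMulSub a T 0) (powMulSub a T m) :=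
    ⟨by rwa [powMulSub_zero ha.ne'], hmax⟩
  have hcT : c ∈ Ioo (powMulSub a T T) (powMulSub a T m) := ⟨by rwa [powMulSub_self], hmax⟩
  obtain ⟨tm, ⟨htm0, htmm⟩, htm⟩ := intermediate_value_Ioo hm0.le hf.continuousOn hc0
  obtain ⟨tp, ⟨htpm, htpT⟩, htp⟩ := intermediate_value_Ioo' hmT.le hf.continuousOn hcT
  refine ⟨tm, tp, htm0, htmm, htpm, htpT, htm, htp, fun t ht htc => ?_⟩
  have htT : t < T := lt_of_not_ge fun hTt => (powMulSub_nonpos ht.le hTt).not_gt (htc ▸ hc)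
  rcases lt_trichotomy t m with htm' | rfl | hmt
  · exact .inl <| (strictMonoOn_powMulSub ha).injOn ⟨ht.le, htm'.le⟩ ⟨htm0.le, htmm.le⟩
      (htc.trans htm.symm)
  · exact absurd htc hmax.ne'
  · exact .inr <| (strictAntiOn_powMulSub ha hT.le).injOn ⟨hmt.le, htT.le⟩
      ⟨htpm.le, htpT.le⟩ (htc.trans htp.symm)

end powMulSub

theorem shrinkage_equation_two_roots
    (p lam : ℝ) (hp0 : 0 < p) (hp1 : p < 1) (hlam : 0 < lam)
    (T0 T : ℝ)
    (hT0 : T0 = (2 - p) * (p * (1 - p) ^ (p - 1) * lam) ^ (1 / (2 - p)))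
    (hT : T0 < T) :
    ∃ tm tp : ℝ,
      0 < tm ∧ tm < (1 - p) * T / (2 - p) ∧
      (1 - p) * T / (2 - p) < tp ∧ tp < T ∧
      tm ^ ((1 : ℝ) - p) * (T - tm) = p * lam ∧
      tp ^ ((1 : ℝ) - p) * (T - tp) = p * lam ∧
      ∀ t : ℝ, 0 < t → t ^ ((1 : ℝ) - p) * (T - t) = p * lam → t = tm ∨ t = tp := by
  have ha : 0 < 1 - p := by linarith
  have hc : 0 < p * lam := mul_pos hp0 hlam
  have h2p : 1 - p + 1 = 2 - p := by ring
  have hT0' : T0 = (1 - p + 1) * (p * lam * (1 - p) ^ (-(1 - p))) ^ (1 / (1 - p + 1)) := by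
    rw [hT0, h2p, neg_sub, mul_right_comm]
  have hTpos : 0 < T := lt_of_le_of_lt (by rw [hT0']; positivity) hT
  have hmax := lt_powMulSub_argmax ha hc (hT0' ▸ hT)
  simpa only [powMulSub, h2p] using exists_two_roots_powMulSub_eq ha hc hTpos hmax
end

section
/- Let p ∈ (0,1), λ > 0, and T₀ = (2−p)·(p·(1−p)^{p−1}·λ)^{1/(2−p)}. For T > T₀ let t₋(T) ∈ (0, (1−p)T/(2−p)) and t₊(T) ∈ ((1−p)T/(2−p), T) be the two solutions of t^{1−p}(T − t) = p·λ. Then for any T₀ < T < T', one has t₋(T') < t₋(T) and t₊(T) < t₊(T'); that is, t₋ is strictly decreasing and t₊ is strictly increasing in T. Moreover, as T decreases to T₀ both t₋(T) and t₊(T) tend to the common value (1−p)T₀/(2−p). -/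
open scoped Classical

/-!
The profile `f_T(t) = t^(1-p) (T - t)` increases on `[0, s(T)]` and decreases on `[s(T), ∞)`,
where `s(T) = (1-p)T/(2-p)`, and its maximum equals `pλ` exactly at `T = T₀`. Since `f_T(t)` is
strictly increasing in `T` for `t > 0`, raising `T` lifts the graph, which pushes the root on the
rising branch to the left and the root on the falling branch to the right. As `T ↓ T₀` the level
`pλ` becomes the maximum of `f_T`, squeezing both roots onto `s(T₀)`.
-/

namespace Shrinkage

open Filter Set Topology

noncomputable def profile (p T t : ℝ) : ℝ := t ^ (1 - p) * (T - t)

noncomputable def peak (p T : ℝ) : ℝ := (1 - p) * T / (2 - p)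

noncomputable def threshold (p v : ℝ) : ℝ :=
  (2 - p) * (p * (1 - p) ^ (p - 1) * v) ^ (1 / (2 - p))

variable {p : ℝ}

theorem hasDerivAt_profile (T : ℝ) {t : ℝ} (ht : 0 < t) :
    HasDerivAt (profile p T) (t ^ (-p) * ((1 - p) * T - (2 - p) * t)) t := by
  have hpow : HasDerivAt (fun s : ℝ => s ^ (1 - p)) ((1 - p) * t ^ (1 - p - 1)) t :=
    Real.hasDerivAt_rpow_const (Or.inl ht.ne')
  refine (hpow.mul ((hasDerivAt_id t).const_sub T)).congr_deriv ?_
  rw [show 1 - p - 1 = -p by ring, show (1 : ℝ) - p = -p + 1 by ring,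
    Real.rpow_add ht, Real.rpow_one, id]
  ring

theorem continuous_profile (hp : p < 1) (T : ℝ) : Continuous (profile p T) :=
  (continuous_id.rpow_const fun _ => Or.inr (by linarith)).mul
    (continuous_const.sub continuous_id)

theorem profile_lt_profile {T T' t : ℝ} (ht : 0 < t) (hT : T < T') :
    profile p T t < profile p T' t :=
  mul_lt_mul_of_pos_left (by linarith) (Real.rpow_pos_of_pos ht _)

theorem tendsto_profile_nhdsWithin (T₀ t : ℝ) :
    Tendsto (fun T => profile p T t) (𝓝[>] T₀) (𝓝 (profile p T₀ t)) :=
  ((continuous_const.mul (continuous_id.sub continuous_const)).tendsto T₀).mono_left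
    nhdsWithin_le_nhds

theorem strictMono_peak (hp : p < 1) : StrictMono (peak p) := fun _ _ h =>
  div_lt_div_of_pos_right (mul_lt_mul_of_pos_left h (by linarith)) (by linarith)

theorem tendsto_peak_nhdsWithin (T₀ : ℝ) :
    Tendsto (peak p) (𝓝[>] T₀) (𝓝 (peak p T₀)) :=
  (((continuous_const.mul continuous_id).div_const _).tendsto T₀).mono_left nhdsWithin_le_nhds

theorem peak_nonneg (hp : p < 1) {T : ℝ} (hT : 0 ≤ T) : 0 ≤ peak p T :=
  div_nonneg (mul_nonneg (by linarith) hT) (by linarith)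

theorem strictMonoOn_profile (hp : p < 1) (T : ℝ) :
    StrictMonoOn (profile p T) (Icc 0 (peak p T)) := by
  refine strictMonoOn_of_deriv_pos (convex_Icc _ _) (continuous_profile hp T).continuousOn
    fun t ht => ?_
  rw [interior_Icc] at ht
  rw [(hasDerivAt_profile T ht.1).deriv]
  have : t * (2 - p) < (1 - p) * T := (lt_div_iff₀ (by linarith)).mp ht.2
  exact mul_pos (Real.rpow_pos_of_pos ht.1 _) (by linarith)

theorem strictAntiOn_profile (hp : p < 1) {T : ℝ} (hT : 0 ≤ T) :
    StrictAntiOn (profile p T) (Ici (peak p T)) := by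
  refine strictAntiOn_of_deriv_neg (convex_Ici _) (continuous_profile hp T).continuousOn
    fun t ht => ?_
  rw [interior_Ici] at ht
  have ht0 : 0 < t := (peak_nonneg hp hT).trans_lt ht
  rw [(hasDerivAt_profile T ht0).deriv]
  have : (1 - p) * T < t * (2 - p) := (div_lt_iff₀ (by linarith)).mp ht
  exact mul_neg_of_pos_of_neg (Real.rpow_pos_of_pos ht0 _) (by linarith)

theorem threshold_nonneg (hp0 : 0 ≤ p) (hp1 : p < 1) {v : ℝ} (hv : 0 ≤ v) :
    0 ≤ threshold p v := by
  have := Real.rpow_nonneg (by linarith : (0 : ℝ) ≤ 1 - p) (p - 1)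
  have := Real.rpow_nonneg (by positivity : 0 ≤ p * (1 - p) ^ (p - 1) * v) (1 / (2 - p))
  exact mul_nonneg (by linarith) this

theorem profile_peak_threshold (hp0 : 0 ≤ p) (hp1 : p < 1) {v : ℝ} (hv : 0 ≤ v) :
    profile p (threshold p v) (peak p (threshold p v)) = p * v := by
  have h1p : 0 < 1 - p := by linarith
  have h2p : 2 - p ≠ 0 := by linarith
  set b := p * (1 - p) ^ (p - 1) * v
  have hb : 0 ≤ b := by have := Real.rpow_nonneg h1p.le (p - 1); positivity
  set c := b ^ (1 / (2 - p))
  have hc : 0 ≤ c := Real.rpow_nonneg hb _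
  have hthreshold : threshold p v = (2 - p) * c := rfl
  have hpeak : peak p (threshold p v) = (1 - p) * c := by
    rw [peak, hthreshold]; field_simp
  have hcpow : c ^ (2 - p) = b := by
    simp only [c, one_div, Real.rpow_inv_rpow hb h2p]
  calc profile p (threshold p v) (peak p (threshold p v))
      = (1 - p) ^ (1 - p) * (c ^ (1 - p) * c) := by
        rw [hpeak, profile, hthreshold, Real.mul_rpow h1p.le hc]; ring
    _ = (1 - p) ^ (1 - p) * b := by
        rw [← hcpow, ← Real.rpow_add_one' hc (by linarith), show 1 - p + 1 = 2 - p by ring]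
    _ = p * v := by
        rw [show b = p * v * (1 - p) ^ (p - 1) by ring, mul_left_comm,
          ← Real.rpow_add h1p]
        norm_num

theorem lt_of_profile_eq_of_le_peak (hp : p < 1) {T T' x y : ℝ} (hT : T < T') (hx : 0 < x)
    (hxT : x ≤ peak p T) (hy : 0 ≤ y) (hyT' : y ≤ peak p T')
    (h : profile p T x = profile p T' y) : y < x := by
  by_contra! hxy
  have hmono : profile p T' x ≤ profile p T' y :=
    (strictMonoOn_profile hp T').monotoneOn
      ⟨hx.le, hxT.trans (strictMono_peak hp hT).le⟩ ⟨hy, hyT'⟩ hxy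
  linarith [profile_lt_profile (p := p) hx hT]

theorem lt_of_profile_eq_of_peak_le (hp : p < 1) {T T' x y : ℝ} (hT₀ : 0 ≤ T) (hT : T < T')
    (hx : peak p T ≤ x) (hy : peak p T' ≤ y)
    (h : profile p T x = profile p T' y) : x < y := by
  by_contra! hyx
  have hTy : peak p T < y := (strictMono_peak hp hT).trans_le hy
  have hanti : profile p T x ≤ profile p T y :=
    (strictAntiOn_profile hp hT₀).antitoneOn hTy.le hx hyx
  linarith [profile_lt_profile (p := p) ((peak_nonneg hp hT₀).trans_lt hTy) hT]

theorem tendsto_root_of_lt_peak (hp : p < 1) {T₀ : ℝ} {r : ℝ → ℝ}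
    (hr : ∀ T, T₀ < T → 0 < r T ∧ r T < peak p T ∧
      profile p T (r T) = profile p T₀ (peak p T₀)) :
    Tendsto r (𝓝[>] T₀) (𝓝 (peak p T₀)) := by
  have hr' : ∀ᶠ T in 𝓝[>] T₀, _ := eventually_nhdsWithin_of_forall hr
  refine tendsto_order.2 ⟨fun a ha => ?_, fun b hb => ?_⟩
  · rcases le_or_gt a 0 with ha0 | ha0
    · filter_upwards [hr'] with T hT using ha0.trans_lt hT.1
    have hlt : profile p T₀ a < profile p T₀ (peak p T₀) :=
      strictMonoOn_profile hp T₀ ⟨ha0.le, ha.le⟩ ⟨ha0.le.trans ha.le, le_rfl⟩ ha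
    filter_upwards [hr', (tendsto_profile_nhdsWithin T₀ a).eventually (gt_mem_nhds hlt),
      self_mem_nhdsWithin] with T hT hTa hT₀T
    rw [← hT.2.2] at hTa
    exact ((strictMonoOn_profile hp T).lt_iff_lt
      ⟨ha0.le, (ha.trans (strictMono_peak hp hT₀T)).le⟩ ⟨hT.1.le, hT.2.1.le⟩).1 hTa
  · filter_upwards [hr', (tendsto_peak_nhdsWithin T₀).eventually (gt_mem_nhds hb)]
      with T hT hTb using hT.2.1.trans hTb

theorem tendsto_root_of_peak_lt (hp : p < 1) {T₀ : ℝ} (hT₀ : 0 ≤ T₀) {r : ℝ → ℝ}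
    (hr : ∀ T, T₀ < T → peak p T < r T ∧ profile p T (r T) = profile p T₀ (peak p T₀)) :
    Tendsto r (𝓝[>] T₀) (𝓝 (peak p T₀)) := by
  have hr' : ∀ᶠ T in 𝓝[>] T₀, _ := eventually_nhdsWithin_of_forall hr
  refine tendsto_order.2 ⟨fun a ha => ?_, fun b hb => ?_⟩
  · filter_upwards [hr', self_mem_nhdsWithin] with T hT hT₀T
    exact ha.trans ((strictMono_peak hp hT₀T).trans hT.1)
  have hlt : profile p T₀ b < profile p T₀ (peak p T₀) :=
    strictAntiOn_profile hp hT₀ (mem_Ici.2 le_rfl) hb.le hb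
  filter_upwards [hr', (tendsto_profile_nhdsWithin T₀ b).eventually (gt_mem_nhds hlt),
    (tendsto_peak_nhdsWithin T₀).eventually (gt_mem_nhds hb), self_mem_nhdsWithin]
    with T hT hTb hpb hT₀T
  rw [← hT.2] at hTb
  exact ((strictAntiOn_profile hp (hT₀.trans hT₀T.le)).lt_iff_gt hpb.le hT.1.le).1 hTb

end Shrinkage

open Shrinkage

theorem shrinkage_roots_monotone
    (p lam : ℝ) (hp0 : 0 < p) (hp1 : p < 1) (hlam : 0 < lam)
    (T0 : ℝ)
    (hT0 : T0 = (2 - p) * (p * (1 - p) ^ (p - 1) * lam) ^ (1 / (2 - p)))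
    (tm tp : ℝ → ℝ)
    (htm : ∀ T : ℝ, T0 < T →
      0 < tm T ∧ tm T < (1 - p) * T / (2 - p) ∧
      tm T ^ ((1 : ℝ) - p) * (T - tm T) = p * lam)
    (htp : ∀ T : ℝ, T0 < T →
      (1 - p) * T / (2 - p) < tp T ∧ tp T < T ∧
      tp T ^ ((1 : ℝ) - p) * (T - tp T) = p * lam) :
    (∀ T T' : ℝ, T0 < T → T < T' → tm T' < tm T) ∧
    (∀ T T' : ℝ, T0 < T → T < T' → tp T < tp T') ∧
    Filter.Tendsto tm (nhdsWithin T0 (Set.Ioi T0)) (nhds ((1 - p) * T0 / (2 - p))) ∧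
    Filter.Tendsto tp (nhdsWithin T0 (Set.Ioi T0)) (nhds ((1 - p) * T0 / (2 - p))) := by
  have hT0_nonneg : 0 ≤ T0 := hT0 ▸ threshold_nonneg hp0.le hp1 hlam.le
  have hpeak : profile p T0 (peak p T0) = p * lam :=
    hT0 ▸ profile_peak_threshold hp0.le hp1 hlam.le
  have hleft : ∀ T, T0 < T → 0 < tm T ∧ tm T < peak p T ∧
      profile p T (tm T) = profile p T0 (peak p T0) := by
    rw [hpeak]; exact htm
  have hright : ∀ T, T0 < T → peak p T < tp T ∧
      profile p T (tp T) = profile p T0 (peak p T0) := by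
    rw [hpeak]; exact fun T hT => ⟨(htp T hT).1, (htp T hT).2.2⟩
  refine ⟨fun T T' hT hTT' => ?_, fun T T' hT hTT' => ?_,
    tendsto_root_of_lt_peak hp1 hleft, tendsto_root_of_peak_lt hp1 hT0_nonneg hright⟩
  · obtain ⟨h0, hlt, heq⟩ := hleft T hT
    obtain ⟨h0', hlt', heq'⟩ := hleft T' (hT.trans hTT')
    exact lt_of_profile_eq_of_le_peak hp1 hTT' h0 hlt.le h0'.le hlt'.le (heq.trans heq'.symm)
  · obtain ⟨hlt, heq⟩ := hright T hT
    obtain ⟨hlt', heq'⟩ := hright T' (hT.trans hTT')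
    exact lt_of_profile_eq_of_peak_le hp1 (hT0_nonneg.trans hT.le) hTT' hlt.le hlt'.le
      (heq.trans heq'.symm)
end

section
/- Let p ∈ [0,1], c ≥ 0, let x ∈ ℝⁿ have nonnegative entries, and suppose xᵢ = x_j > 0 for two distinct indices i ≠ j. Let x⊥ be a projection of x onto F_p(c) with nonnegative entries (for p = 0 interpret F_0(c) as the set of vectors with at most c nonzero entries, c a nonnegative integer). If x⊥ᵢ = x⊥_j > 0, then x⊥ᵢ ≥ ((1−p)/(2−p))·xᵢ. -/
open scoped Classical

noncomputable def FballGen {n : ℕ} (p c : ℝ) : Set (Fin n → ℂ) :=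
  if p = 0 then {x | ((Finset.univ.filter fun i => x i ≠ 0).card : ℝ) ≤ c}
  else {x | ∑ i, ‖x i‖ ^ p ≤ c}

def IsProjGen {n : ℕ} (p c : ℝ) (x xp : Fin n → ℂ) : Prop :=
  xp ∈ FballGen p c ∧ ∀ u ∈ FballGen p c, l2norm (x - xp) ≤ l2norm (x - u)

/-! For `p = 0`, replacing a nonzero entry of an ℓ₀-projection by the corresponding entry of `x`
keeps the support, so the projection agrees with `x` there. For `0 < p ≤ 1`, write `a = xᵢ = xⱼ`,
`b = x⊥ᵢ = x⊥ⱼ` and move the two entries of the projection to `b + δ + η` and `b - δ` with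
`η = (1 - p) δ² / (b + δ)`. The second difference of `t ↦ t ^ p` at `b` is at least
`p (1 - p) (b + δ) ^ (p - 2) δ²`, which is exactly what the tangent line at `b + δ` allows for the
extra `η`, so the moved vector stays in the ball. Minimality of the projection then gives
`(1 - p) (a - b) ≤ b + 3δ`, and `δ → 0` gives `(1 - p) a ≤ (2 - p) b`. -/
namespace Real

lemma rpow_le_rpow_add_mul_sub {p u v : ℝ} (hp0 : 0 ≤ p) (hp1 : p ≤ 1) (hu : 0 < u) (hv : 0 ≤ v) :
    v ^ p ≤ u ^ p + p * u ^ (p - 1) * (v - u) := by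
  have hs : -1 ≤ v / u - 1 := by linarith [div_nonneg hv hu.le]
  have hbern := rpow_one_add_le_one_add_mul_self hs hp0 hp1
  rw [add_sub_cancel, div_rpow hv hu.le, div_le_iff₀ (rpow_pos_of_pos hu p)] at hbern
  calc v ^ p ≤ (1 + p * (v / u - 1)) * u ^ p := hbern
    _ = u ^ p + p * u ^ (p - 1) * (v - u) := by
      rw [rpow_sub_one hu.ne']; field_simp

lemma neg_mul_rpow_sub_one_mul_sub_le_rpow_sub_rpow {q u v M : ℝ} (hq : q ≤ 0) (hu : 0 < u)
    (huv : u ≤ v) (hvM : v ≤ M) :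
    -q * M ^ (q - 1) * (v - u) ≤ u ^ q - v ^ q := by
  rcases huv.eq_or_lt with rfl | huv
  · simp
  obtain ⟨ξ, ⟨huξ, hξv⟩, hslope⟩ := exists_hasDerivAt_eq_slope (fun t => t ^ q)
    (fun t => q * t ^ (q - 1)) huv
    (fun t ht => (continuousAt_rpow_const t q (Or.inl (hu.trans_le ht.1).ne')).continuousWithinAt)
    (fun t ht => hasDerivAt_rpow_const (Or.inl (hu.trans ht.1).ne'))
  have hMξ : M ^ (q - 1) ≤ ξ ^ (q - 1) :=
    rpow_le_rpow_of_nonpos (hu.trans huξ) (hξv.le.trans hvM) (by linarith)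
  rw [eq_div_iff (sub_ne_zero.mpr huv.ne')] at hslope
  nlinarith [mul_le_mul_of_nonneg_left hMξ (mul_nonneg (neg_nonneg.mpr hq) (sub_nonneg.mpr huv.le))]

lemma mul_sq_le_two_mul_rpow_sub_rpow_sub_rpow {p b δ : ℝ} (hp0 : 0 ≤ p) (hp1 : p ≤ 1)
    (hδ : 0 ≤ δ) (hδb : δ < b) :
    p * (1 - p) * (b + δ) ^ (p - 2) * δ ^ 2 ≤ 2 * b ^ p - (b - δ) ^ p - (b + δ) ^ p := by
  set K := p * (1 - p) * (b + δ) ^ (p - 2)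
  let ψ := fun s : ℝ => 2 * b ^ p - (b - s) ^ p - (b + s) ^ p - K * s ^ 2
  have hmono : MonotoneOn ψ (Set.Icc 0 δ) := by
    refine monotoneOn_of_hasDerivWithinAt_nonneg (convex_Icc 0 δ)
      (f' := fun s => p * (b - s) ^ (p - 1) - p * (b + s) ^ (p - 1) - 2 * K * s)
      ?_ ?_ ?_
    · have := continuous_rpow_const hp0
      fun_prop
    · intro s hs
      rw [interior_Icc] at hs
      have hl : HasDerivAt (fun s => (b - s) ^ p) (-1 * p * (b - s) ^ (p - 1)) s :=
        ((hasDerivAt_id' s).const_sub b).rpow_const (Or.inl (by linarith [hs.2]))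
      have hr : HasDerivAt (fun s => (b + s) ^ p) (1 * p * (b + s) ^ (p - 1)) s :=
        ((hasDerivAt_id' s).const_add b).rpow_const (Or.inl (by linarith [hs.1]))
      have hK : HasDerivAt (fun s => K * s ^ 2) (K * (2 * s)) s := by
        simpa using (hasDerivAt_pow 2 s).const_mul K
      exact ((((hasDerivAt_const s (2 * b ^ p)).sub hl).sub hr).sub hK).hasDerivWithinAt
        |>.congr_deriv (by ring)
    · intro s hs
      rw [interior_Icc] at hs
      obtain ⟨hs0, hsδ⟩ := hs
      have hslope := neg_mul_rpow_sub_one_mul_sub_le_rpow_sub_rpow (q := p - 1) (by linarith)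
        (by linarith : 0 < b - s) (by linarith : b - s ≤ b + s) (by linarith : b + s ≤ b + δ)
      rw [show p - 1 - 1 = p - 2 by ring] at hslope
      nlinarith [mul_le_mul_of_nonneg_left hslope hp0]
  have := hmono ⟨le_rfl, hδ⟩ ⟨hδ, le_rfl⟩ hδ
  norm_num [ψ] at this
  linarith

lemma rpow_add_add_add_rpow_sub_le_two_mul_rpow {p b δ η : ℝ} (hp0 : 0 ≤ p) (hp1 : p ≤ 1)
    (hδ : 0 ≤ δ) (hδb : δ < b) (hη : 0 ≤ η) (hηδ : (b + δ) * η ≤ (1 - p) * δ ^ 2) :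
    (b + δ + η) ^ p + (b - δ) ^ p ≤ 2 * b ^ p := by
  have hbδ : 0 < b + δ := by linarith
  have htangent := rpow_le_rpow_add_mul_sub hp0 hp1 hbδ (v := b + δ + η) (by linarith)
  have hsecond := mul_sq_le_two_mul_rpow_sub_rpow_sub_rpow hp0 hp1 hδ hδb
  have hslope : p * (b + δ) ^ (p - 1) * η ≤ p * (1 - p) * (b + δ) ^ (p - 2) * δ ^ 2 := by
    rw [show p - 1 = p - 2 + 1 by ring, rpow_add_one hbδ.ne']
    nlinarith [mul_le_mul_of_nonneg_left hηδ (mul_nonneg hp0 (rpow_nonneg hbδ.le (p - 2)))]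
  rw [add_sub_cancel_left] at htangent
  linarith

end Real

lemma Fintype.sum_sub_sum_eq_sum_sub {ι M : Type*} [Fintype ι] [AddCommGroup M] {f g : ι → M}
    (s : Finset ι) (hfg : ∀ t ∉ s, f t = g t) :
    ∑ t, f t - ∑ t, g t = ∑ t ∈ s, (f t - g t) := by
  rw [← Finset.sum_sub_distrib]
  exact (Finset.sum_subset s.subset_univ fun t _ ht => sub_eq_zero.mpr (hfg t ht)).symm

section Projection

variable {n : ℕ} {p c : ℝ}

lemma mem_FballGen_zero_of_support_subset {u v : Fin n → ℂ} (huv : ∀ t, u t ≠ 0 → v t ≠ 0)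
    (hv : v ∈ FballGen 0 c) : u ∈ FballGen 0 c := by
  simp only [FballGen, if_pos, Set.mem_ofPred_eq] at hv ⊢
  refine le_trans (Nat.cast_le.mpr (Finset.card_le_card fun t ht => ?_)) hv
  simp only [Finset.mem_filter, Finset.mem_univ, true_and] at ht ⊢
  exact huv t ht

lemma mem_FballGen_of_sum_rpow_le {u v : Fin n → ℂ} (hp : p ≠ 0) (s : Finset (Fin n))
    (huv : ∀ t ∉ s, u t = v t) (hs : ∑ t ∈ s, ‖u t‖ ^ p ≤ ∑ t ∈ s, ‖v t‖ ^ p)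
    (hv : v ∈ FballGen p c) : u ∈ FballGen p c := by
  simp only [FballGen, if_neg hp, Set.mem_ofPred_eq] at hv ⊢
  have hdiff := Fintype.sum_sub_sum_eq_sum_sub s (f := fun t => ‖u t‖ ^ p)
    (g := fun t => ‖v t‖ ^ p) fun t ht => by rw [huv t ht]
  rw [Finset.sum_sub_distrib] at hdiff
  linarith

namespace IsProjGen

section

variable {x xp u : Fin n → ℂ}

lemma sum_sq_le (h : IsProjGen p c x xp) (hu : u ∈ FballGen p c) (s : Finset (Fin n))
    (hus : ∀ t ∉ s, u t = xp t) :
    ∑ t ∈ s, ‖x t - xp t‖ ^ 2 ≤ ∑ t ∈ s, ‖x t - u t‖ ^ 2 := by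
  have hdist := h.2 u hu
  rw [l2norm, l2norm, Real.sqrt_le_sqrt_iff (by positivity)] at hdist
  have hdiff := Fintype.sum_sub_sum_eq_sum_sub s (f := fun t => ‖(x - u) t‖ ^ 2)
    (g := fun t => ‖(x - xp) t‖ ^ 2) fun t ht => by simp [hus t ht]
  rw [Finset.sum_sub_distrib] at hdiff
  simp only [Pi.sub_apply] at hdiff hdist
  linarith

lemma apply_eq_of_apply_ne_zero (h : IsProjGen 0 c x xp) {i : Fin n} (hi : xp i ≠ 0) :
    xp i = x i := by
  have hu : Function.update xp i (x i) ∈ FballGen 0 c := by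
    refine mem_FballGen_zero_of_support_subset (fun t ht => ?_) h.1
    by_cases hti : t = i
    · exact hti ▸ hi
    · simpa [hti] using ht
  have hsq := h.sum_sq_le hu {i} fun t ht =>
    Function.update_of_ne (Finset.notMem_singleton.mp ht) _ _
  simp only [Finset.sum_singleton, Function.update_self, sub_self, norm_zero] at hsq
  have : ‖x i - xp i‖ = 0 := by nlinarith [norm_nonneg (x i - xp i)]
  exact (sub_eq_zero.mp (norm_eq_zero.mp this)).symm

end

variable {x xp : Fin n → ℝ} {i j : Fin n}

lemma one_sub_mul_sub_le_add (hp0 : 0 < p) (hp1 : p ≤ 1)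
    (hproj : IsProjGen p c (fun t => (x t : ℂ)) (fun t => (xp t : ℂ))) (hij : i ≠ j)
    (hxeq : x i = x j) (hxpeq : xp i = xp j) {δ : ℝ} (hδ : 0 < δ) (hδb : δ < xp i) :
    (1 - p) * (x i - xp i) ≤ xp i + 3 * δ := by
  set a := x i
  set b := xp i
  set η := (1 - p) * δ ^ 2 / (b + δ)
  have hbδ : 0 < b + δ := by linarith
  have hηeq : (b + δ) * η = (1 - p) * δ ^ 2 := mul_div_cancel₀ _ hbδ.ne'
  have hη0 : 0 ≤ η := div_nonneg (mul_nonneg (by linarith) (sq_nonneg δ)) hbδ.le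
  have hηδ : η ≤ δ := by
    rw [div_le_iff₀ hbδ]
    nlinarith
  set u : Fin n → ℝ := Function.update (Function.update xp i (b + δ + η)) j (b - δ)
  have hui : u i = b + δ + η := by simp [u, hij]
  have huj : u j = b - δ := by simp [u]
  have hu_off : ∀ t ∉ ({i, j} : Finset (Fin n)), (u t : ℂ) = xp t := by
    intro t ht
    simp only [Finset.mem_insert, Finset.mem_singleton, not_or] at ht
    simp [u, ht.1, ht.2]
  have hmem : (fun t => (u t : ℂ)) ∈ FballGen p c := by
    refine mem_FballGen_of_sum_rpow_le hp0.ne' {i, j} hu_off ?_ hproj.1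
    rw [Finset.sum_pair hij, Finset.sum_pair hij, hui, huj, ← hxpeq]
    simp only [Complex.norm_real, Real.norm_eq_abs]
    rw [abs_of_nonneg (by linarith), abs_of_nonneg (by linarith), abs_of_nonneg (by linarith)]
    linarith [Real.rpow_add_add_add_rpow_sub_le_two_mul_rpow hp0.le hp1 hδ.le hδb hη0 hηeq.le]
  have hq := hproj.sum_sq_le hmem {i, j} hu_off
  rw [Finset.sum_pair hij, Finset.sum_pair hij] at hq
  simp only [← Complex.ofReal_sub, Complex.norm_real, Real.norm_eq_abs, sq_abs, hui, huj,
    ← hxeq, ← hxpeq] at hq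
  have hfirst : 2 * (a - b) * η ≤ 2 * δ ^ 2 + 2 * δ * η + η ^ 2 := by nlinarith
  have hη_small : (1 - p) * δ ^ 2 * (2 * δ + η) ≤ 3 * δ * δ ^ 2 := by
    have : (1 - p) * (2 * δ + η) ≤ 3 * δ := by nlinarith
    nlinarith [sq_nonneg δ]
  have hscaled : (1 - p) * (a - b) * δ ^ 2 ≤ (b + 3 * δ) * δ ^ 2 := by
    have e1 : (a - b) * ((b + δ) * η) = (a - b) * ((1 - p) * δ ^ 2) := by rw [hηeq]
    have e2 : (2 * δ + η) * ((b + δ) * η) = (2 * δ + η) * ((1 - p) * δ ^ 2) := by rw [hηeq]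
    nlinarith [mul_le_mul_of_nonneg_left hfirst hbδ.le]
  exact le_of_mul_le_mul_right hscaled (by positivity)

lemma one_sub_mul_sub_le (hp0 : 0 < p) (hp1 : p ≤ 1)
    (hproj : IsProjGen p c (fun t => (x t : ℂ)) (fun t => (xp t : ℂ))) (hij : i ≠ j)
    (hxeq : x i = x j) (hxpeq : xp i = xp j) (hxppos : 0 < xp i) :
    (1 - p) * (x i - xp i) ≤ xp i := by
  refine le_of_forall_pos_le_add fun ε hε => ?_
  have hδ : 0 < min (xp i / 2) (ε / 3) := lt_min (by linarith) (by linarith)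
  calc (1 - p) * (x i - xp i)
      ≤ xp i + 3 * min (xp i / 2) (ε / 3) :=
        one_sub_mul_sub_le_add hp0 hp1 hproj hij hxeq hxpeq hδ
          ((min_le_left _ _).trans_lt (by linarith))
    _ ≤ xp i + ε := by linarith [min_le_right (xp i / 2) (ε / 3)]

end IsProjGen

end Projection

theorem equal_entries_projection_lower_bound_general
    {n : ℕ} (p c : ℝ) (hp0 : 0 ≤ p) (hp1 : p ≤ 1)
    (x xp : Fin n → ℝ)
    (hproj : IsProjGen p c (fun t => (x t : ℂ)) (fun t => (xp t : ℂ)))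
    (i j : Fin n) (hij : i ≠ j) (hxeq : x i = x j)
    (hxpeq : xp i = xp j) (hxppos : 0 < xp i) :
    (1 - p) / (2 - p) * x i ≤ xp i := by
  rcases hp0.eq_or_lt with rfl | hp
  · have hxpi : xp i = x i := by
      exact_mod_cast hproj.apply_eq_of_apply_ne_zero (i := i) (by exact_mod_cast hxppos.ne')
    norm_num
    linarith
  · have := hproj.one_sub_mul_sub_le hp hp1 hij hxeq hxpeq hxppos
    rw [div_mul_eq_mul_div, div_le_iff₀ (by linarith)]
    linarith

theorem equal_entries_projection_lower_bound
    {n : ℕ} (p c : ℝ) (hp0 : 0 ≤ p) (hp1 : p ≤ 1) (hc : 0 ≤ c)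
    (hcint : p = 0 → ∃ k : ℕ, c = (k : ℝ))
    (x xp : Fin n → ℝ) (hx : ∀ i, 0 ≤ x i) (hxp : ∀ i, 0 ≤ xp i)
    (hproj : IsProjGen p c (fun t => (x t : ℂ)) (fun t => (xp t : ℂ)))
    (i j : Fin n) (hij : i ≠ j) (hxeq : x i = x j) (hxpos : 0 < x i)
    (hxpeq : xp i = xp j) (hxppos : 0 < xp i) :
    (1 - p) / (2 - p) * x i ≤ xp i :=
  equal_entries_projection_lower_bound_general p c hp0 hp1 x xp hproj i j hij hxeq hxpeq hxppos
end
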